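/- arXiv:2005.13436 — 7 statements merged into one kernel-verified Lean document; each statement's English description precedes it below -/
import Mathlib

section
/- Let A ∈ ℝ^{N×N} be a nonnegative doubly stochastic matrix (all row sums and all column sums equal 1) that is irreducible (for every pair of indices i, j there exists k ≥ 1 with (A^k)_{ij} > 0) and has all diagonal entries strictly positive, and let J := (1/N)1_N 1_N^T. Then: (i) AJ = JA = J; (ii) ρ := ‖A − J‖ < 1, where ‖·‖ is the ℓ₂-operator (spectral) norm; and (iii) for every x ∈ ℝ^N, ‖Ax − Jx‖ ≤ ρ‖x − Jx‖. -/
/-!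
Since `A J = J`, we have `A - J = A (1 - J)` and `(A - J) J = 0`, which gives (iii). For (ii),
compactness of the unit sphere reduces the claim to `‖A y‖ < ‖y‖` for nonzero mean-zero `y`,
because `‖(1 - J) x‖ ≤ ‖x‖` (`J` is an orthogonal projection). Summing the Jensen gaps of the rows
of `A` and using the column sums gives
`2 (‖y‖² - ‖A y‖²) = ∑ᵢ ∑ⱼ ∑ₖ Aᵢⱼ Aᵢₖ (yⱼ - yₖ)²`.
If this vanishes, its terms with `i = j` force `yⱼ = yₖ` whenever `Aⱼₖ > 0` (as `Aⱼⱼ > 0`);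
by irreducibility `y` is then constant, hence zero.
-/

noncomputable section
open scoped BigOperators

/-- The averaging matrix `J = (1/N) 1_N 1_Nᵀ`. -/
def consensusJ (N : ℕ) : Matrix (Fin N) (Fin N) ℝ := Matrix.of fun _ _ => (N : ℝ)⁻¹

/-- The ℓ₂-operator (spectral) norm of a real matrix, viewed as an operator on
Euclidean space. -/
def matrixL2OpNorm {N : ℕ} (M : Matrix (Fin N) (Fin N) ℝ) : ℝ :=
  ‖LinearMap.toContinuousLinearMap (Matrix.toEuclideanLin M)‖

open Finset Matrix

variable {ι : Type*} [Fintype ι]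

theorem two_mul_sum_mul_sq_sub_sq_eq (w y : ι → ℝ) (hw : ∑ j, w j = 1) :
    2 * (∑ j, w j * y j ^ 2 - (∑ j, w j * y j) ^ 2) =
      ∑ j, ∑ k, w j * w k * (y j - y k) ^ 2 := by
  have hexpand : ∀ j k, w j * w k * (y j - y k) ^ 2 =
      w j * y j ^ 2 * w k + w j * (w k * y k ^ 2) - 2 * (w j * y j) * (w k * y k) := by
    intro j k; ring
  simp only [hexpand, sum_add_distrib, sum_sub_distrib, ← mul_sum, ← sum_mul, hw]
  ring

theorem eq_zero_of_forall_eq_of_sum_eq_zero {y : ι → ℝ} (hconst : ∀ i j, y i = y j)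
    (hsum : ∑ i, y i = 0) : y = 0 := by
  funext i
  have : Nonempty ι := ⟨i⟩
  rw [Fintype.sum_congr _ _ fun j => hconst j i, sum_const, card_univ, nsmul_eq_mul] at hsum
  exact (mul_eq_zero.mp hsum).resolve_left (Nat.cast_ne_zero.mpr Fintype.card_ne_zero)

theorem ContinuousLinearMap.opNorm_lt_one_of_norm_apply_lt {E F : Type*}
    [NormedAddCommGroup E] [NormedSpace ℝ E] [FiniteDimensional ℝ E]
    [SeminormedAddCommGroup F] [NormedSpace ℝ F] (T : E →L[ℝ] F)
    (hT : ∀ x, x ≠ 0 → ‖T x‖ < ‖x‖) : ‖T‖ < 1 := by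
  rcases subsingleton_or_nontrivial E with _ | _
  · rw [Subsingleton.elim T 0, opNorm_zero]
    exact one_pos
  · obtain ⟨z, hz, hmax⟩ := (isCompact_sphere (0 : E) 1).exists_isMaxOn
      (NormedSpace.sphere_nonempty.mpr zero_le_one) T.continuous.norm.continuousOn
    rw [mem_sphere_zero_iff_norm] at hz
    calc ‖T‖ ≤ ‖T z‖ := T.opNorm_le_of_unit_norm (norm_nonneg _) fun x hx =>
          hmax (mem_sphere_zero_iff_norm.mpr hx)
      _ < 1 := hz ▸ hT z (norm_ne_zero_iff.mp (hz ▸ one_ne_zero))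

namespace Matrix

variable [DecidableEq ι] {A : Matrix ι ι ℝ}

theorem two_mul_sum_sq_sub_sum_mulVec_sq_eq (hA : A ∈ doublyStochastic ℝ ι) (y : ι → ℝ) :
    2 * (∑ j, y j ^ 2 - ∑ i, (A *ᵥ y) i ^ 2) =
      ∑ i, ∑ j, ∑ k, A i j * A i k * (y j - y k) ^ 2 := by
  have hsq : ∑ j, y j ^ 2 = ∑ i, ∑ j, A i j * y j ^ 2 := by
    rw [sum_comm]
    simp only [← sum_mul, sum_col_of_mem_doublyStochastic hA, one_mul]
  rw [hsq, ← sum_sub_distrib, mul_sum]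
  exact sum_congr rfl fun i _ =>
    two_mul_sum_mul_sq_sub_sq_eq (A i) y (sum_row_of_mem_doublyStochastic hA i)

theorem eq_of_pow_apply_pos {α : Type*} (hA : ∀ i j, 0 ≤ A i j) {f : ι → α}
    (hf : ∀ i j, 0 < A i j → f i = f j) (n : ℕ) {i j : ι} (hn : 0 < (A ^ n) i j) :
    f i = f j := by
  induction n generalizing i with
  | zero =>
    rw [pow_zero, one_apply] at hn
    split_ifs at hn with hij
    · exact congrArg f hij
    · exact absurd hn (lt_irrefl 0)
  | succ n ih =>
    rw [pow_succ', mul_apply] at hn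
    obtain ⟨m, -, hm⟩ : ∃ m ∈ univ, 0 < A i m * (A ^ n) m j := by
      by_contra! h
      exact hn.not_ge (sum_nonpos h)
    have him : 0 < A i m := (hA i m).lt_of_ne' (left_ne_zero_of_mul hm.ne')
    exact (hf i m him).trans (ih (pos_of_mul_pos_right hm (hA i m)))

theorem sum_mulVec_sq_lt_sum_sq (hA : A ∈ doublyStochastic ℝ ι)
    (hirr : ∀ i j, ∃ k : ℕ, 0 < (A ^ k) i j) (hdiag : ∀ i, 0 < A i i) {y : ι → ℝ}
    (hsum : ∑ i, y i = 0) (hy : y ≠ 0) :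
    ∑ i, (A *ᵥ y) i ^ 2 < ∑ i, y i ^ 2 := by
  have hnonneg : ∀ i j, 0 ≤ A i j := fun _ _ => nonneg_of_mem_doublyStochastic hA
  obtain ⟨j, k, hjk, hne⟩ : ∃ j k, 0 < A j k ∧ y j ≠ y k := by
    by_contra! hconst
    refine hy (eq_zero_of_forall_eq_of_sum_eq_zero (fun i j => ?_) hsum)
    obtain ⟨n, hn⟩ := hirr i j
    exact eq_of_pow_apply_pos hnonneg hconst n hn
  have hterm : ∀ i j k, 0 ≤ A i j * A i k * (y j - y k) ^ 2 := fun i j k =>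
    mul_nonneg (mul_nonneg (hnonneg i j) (hnonneg i k)) (sq_nonneg _)
  have hpos : 0 < ∑ i, ∑ j, ∑ k, A i j * A i k * (y j - y k) ^ 2 := by
    refine sum_pos' (fun i _ => sum_nonneg fun j _ => sum_nonneg fun k _ => hterm i j k)
      ⟨j, mem_univ _, sum_pos' (fun j' _ => sum_nonneg fun k _ => hterm j j' k)
        ⟨j, mem_univ _, sum_pos' (fun k _ => hterm j j k) ⟨k, mem_univ _, ?_⟩⟩⟩
    have := hdiag j
    have := sub_ne_zero.mpr hne
    positivity
  linarith [two_mul_sum_sq_sub_sum_mulVec_sq_eq hA y]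

theorem norm_toEuclideanLin_lt (hA : A ∈ doublyStochastic ℝ ι)
    (hirr : ∀ i j, ∃ k : ℕ, 0 < (A ^ k) i j) (hdiag : ∀ i, 0 < A i i)
    {x : EuclideanSpace ℝ ι} (hsum : ∑ i, x i = 0) (hx : x ≠ 0) :
    ‖toEuclideanLin A x‖ < ‖x‖ := by
  rw [← sq_lt_sq₀ (norm_nonneg _) (norm_nonneg _), EuclideanSpace.real_norm_sq_eq,
    EuclideanSpace.real_norm_sq_eq]
  exact sum_mulVec_sq_lt_sum_sq hA hirr hdiag hsum (by simpa using hx)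

end Matrix

section Consensus

variable {N : ℕ}

theorem consensusJ_mulVec_apply (v : Fin N → ℝ) (i : Fin N) :
    (consensusJ N *ᵥ v) i = (N : ℝ)⁻¹ * ∑ j, v j := by
  simp [mulVec, dotProduct, consensusJ, mul_sum]

theorem consensusJ_mem_doublyStochastic (N : ℕ) :
    consensusJ N ∈ doublyStochastic ℝ (Fin N) := by
  refine mem_doublyStochastic_iff_sum.mpr
    ⟨fun _ _ => by simp [consensusJ], fun i => ?_, fun j => ?_⟩
  · simp [consensusJ, i.pos.ne']
  · simp [consensusJ, j.pos.ne']

theorem mul_consensusJ {M : Matrix (Fin N) (Fin N) ℝ} (hrow : ∀ i, ∑ j, M i j = 1) :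
    M * consensusJ N = consensusJ N := by
  ext i j
  simp only [mul_apply, consensusJ, of_apply, ← sum_mul, hrow, one_mul]

theorem consensusJ_mul {M : Matrix (Fin N) (Fin N) ℝ} (hcol : ∀ j, ∑ i, M i j = 1) :
    consensusJ N * M = consensusJ N := by
  ext i j
  simp only [mul_apply, consensusJ, of_apply, ← mul_sum, hcol, mul_one]

theorem isIdempotentElem_consensusJ (N : ℕ) : IsIdempotentElem (consensusJ N) :=
  mul_consensusJ (sum_row_of_mem_doublyStochastic (consensusJ_mem_doublyStochastic N))

theorem sum_sub_toEuclideanLin_consensusJ (x : EuclideanSpace ℝ (Fin N)) :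
    ∑ i, (x - toEuclideanLin (consensusJ N) x) i = 0 := by
  simp [toLpLin_apply, sum_sub_distrib,
    sum_mulVec_of_mem_doublyStochastic (consensusJ_mem_doublyStochastic N)]

theorem norm_sub_toEuclideanLin_consensusJ_le (x : EuclideanSpace ℝ (Fin N)) :
    ‖x - toEuclideanLin (consensusJ N) x‖ ≤ ‖x‖ := by
  set y := x - toEuclideanLin (consensusJ N) x
  have horth : inner ℝ y (toEuclideanLin (consensusJ N) x) = 0 := by
    simp only [PiLp.inner_apply, toLpLin_apply, consensusJ_mulVec_apply, RCLike.inner_apply,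
      conj_trivial]
    rw [← mul_sum]
    exact mul_eq_zero_of_right _ (sum_sub_toEuclideanLin_consensusJ x)
  have := norm_add_sq_eq_norm_sq_add_norm_sq_of_inner_eq_zero _ _ horth
  rw [sub_add_cancel] at this
  exact (mul_self_le_mul_self_iff (norm_nonneg _) (norm_nonneg x)).mpr
    (this ▸ le_add_of_nonneg_right (mul_self_nonneg _))

theorem toEuclideanLin_sub_consensusJ_apply {A : Matrix (Fin N) (Fin N) ℝ}
    (hrow : ∀ i, ∑ j, A i j = 1) (x : EuclideanSpace ℝ (Fin N)) :
    toEuclideanLin (A - consensusJ N) x =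
      toEuclideanLin A (x - toEuclideanLin (consensusJ N) x) := by
  conv_lhs => rw [← mul_consensusJ hrow]
  simp

end Consensus

theorem doubly_stochastic_consensus_contraction_general (N : ℕ)
    (A : Matrix (Fin N) (Fin N) ℝ)
    (hnonneg : ∀ i j, 0 ≤ A i j)
    (hrow : ∀ i, ∑ j, A i j = 1) (hcol : ∀ j, ∑ i, A i j = 1)
    (hirr : ∀ i j, ∃ k : ℕ, 1 ≤ k ∧ 0 < (A ^ k) i j)
    (hdiag : ∀ i, 0 < A i i) :
    (A * consensusJ N = consensusJ N ∧ consensusJ N * A = consensusJ N) ∧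
    matrixL2OpNorm (A - consensusJ N) < 1 ∧
    ∀ x : EuclideanSpace ℝ (Fin N),
      ‖Matrix.toEuclideanLin A x - Matrix.toEuclideanLin (consensusJ N) x‖ ≤
        matrixL2OpNorm (A - consensusJ N) * ‖x - Matrix.toEuclideanLin (consensusJ N) x‖ := by
  have hA : A ∈ doublyStochastic ℝ (Fin N) :=
    mem_doublyStochastic_iff_sum.mpr ⟨hnonneg, hrow, hcol⟩
  set J := toEuclideanLin (consensusJ N)
  set T := LinearMap.toContinuousLinearMap (toEuclideanLin (A - consensusJ N))
  have hT : ∀ x, T x = toEuclideanLin A (x - J x) := toEuclideanLin_sub_consensusJ_apply hrow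
  have hTJ : ∀ x, T (J x) = 0 := fun x => by
    rw [hT, ← LinearMap.comp_apply J, ← toLpLin_mul_same, (isIdempotentElem_consensusJ N).eq,
      sub_self, map_zero]
  refine ⟨⟨mul_consensusJ hrow, consensusJ_mul hcol⟩, ?_, fun x => ?_⟩
  · refine T.opNorm_lt_one_of_norm_apply_lt fun x hx => ?_
    rw [hT]
    by_cases hy : x - J x = 0
    · rwa [hy, map_zero, norm_zero, norm_pos_iff]
    · exact (norm_toEuclideanLin_lt hA (fun i j => (hirr i j).imp fun _ => And.right) hdiag
        (sum_sub_toEuclideanLin_consensusJ x) hy).trans_le (norm_sub_toEuclideanLin_consensusJ_le x)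
  · calc ‖toEuclideanLin A x - J x‖ = ‖T (x - J x)‖ := by
          rw [map_sub T, hTJ, sub_zero, ← LinearMap.sub_apply, ← map_sub]; rfl
      _ ≤ ‖T‖ * ‖x - J x‖ := T.le_opNorm _

/-- For a nonnegative, doubly stochastic, irreducible matrix `A` with strictly
positive diagonal: (i) `AJ = JA = J`; (ii) `ρ := ‖A - J‖ < 1` in the ℓ₂-operator norm; and
(iii) `‖Ax - Jx‖ ≤ ρ‖x - Jx‖` for all `x`. -/
theorem doubly_stochastic_consensus_contraction (N : ℕ) (hN : 0 < N)
    (A : Matrix (Fin N) (Fin N) ℝ)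
    (hnonneg : ∀ i j, 0 ≤ A i j)
    (hrow : ∀ i, ∑ j, A i j = 1) (hcol : ∀ j, ∑ i, A i j = 1)
    (hirr : ∀ i j, ∃ k : ℕ, 1 ≤ k ∧ 0 < (A ^ k) i j)
    (hdiag : ∀ i, 0 < A i i) :
    (A * consensusJ N = consensusJ N ∧ consensusJ N * A = consensusJ N) ∧
    matrixL2OpNorm (A - consensusJ N) < 1 ∧
    ∀ x : EuclideanSpace ℝ (Fin N),
      ‖Matrix.toEuclideanLin A x - Matrix.toEuclideanLin (consensusJ N) x‖ ≤
        matrixL2OpNorm (A - consensusJ N) * ‖x - Matrix.toEuclideanLin (consensusJ N) x‖ :=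
  doubly_stochastic_consensus_contraction_general N A hnonneg hrow hcol hirr hdiag
end
end

section
/- Let M ∈ ℝ^{n×n}, n ≥ 2, be a nonnegative irreducible matrix (for every pair of indices i, j there exists k ≥ 1 with (M^k)_{ij} > 0). Then: (i) the spectral radius ρ(M) is strictly positive and is an eigenvalue of M; (ii) there exists a vector x ∈ ℝ^n with all entries strictly positive such that Mx = ρ(M)x; (iii) ρ(M) is an algebraically simple eigenvalue of M, i.e. it is a simple root of the characteristic polynomial of M. -/
/-!
The Perron root is the Collatz–Wielandt value `r = max {λ ≥ 0 | λ x ≤ M x for some x in the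
standard simplex}`, attained by compactness. Irreducibility makes every maximizer an eigenvector:
otherwise the entrywise positive matrix `∑ k < N, M ^ k` maps it to a vector admitting a larger `λ`.
Nonnegative eigenvectors of an irreducible matrix are positive; this gives the positive Perron
vector `x` and, through the minimal ratio `y i / x i`, shows that the `r`-eigenspace is `ℝ x`.
Taking absolute values in `M v = μ v` gives `‖μ‖ ≤ r`. Finally a positive left eigenvector
annihilates the range of `M - r`, so `(M - r)² y = 0` forces `(M - r) y = 0`: the generalized
eigenspace is the line `ℝ x`, and `r` is a simple root of the characteristic polynomial.
-/

noncomputable section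

open Filter Matrix Polynomial Topology

lemma exists_pos_smul_le {ι : Type*} [Finite ι] (y : ι → ℝ) {v : ι → ℝ} (hv : ∀ i, 0 < v i) :
    ∃ ε : ℝ, 0 < ε ∧ ε • y ≤ v := by
  have h : ∀ i, ∀ᶠ ε in 𝓝 (0 : ℝ), ε * y i < v i := fun i =>
    (continuous_id.mul continuous_const).continuousAt.eventually_lt continuousAt_const
      (by simpa using hv i)
  obtain ⟨ε, hε, hεy⟩ := ((eventually_all.2 h).filter_mono nhdsWithin_le_nhds |>.and
    self_mem_nhdsWithin).exists (f := 𝓝[>] (0 : ℝ))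
  exact ⟨ε, hεy, fun i => (hε i).le⟩

lemma ne_zero_of_forall_pos {ι α : Type*} [Nonempty ι] [Preorder α] [Zero α] {x : ι → α}
    (hx : ∀ i, 0 < x i) : x ≠ 0 :=
  fun h => (hx (Classical.arbitrary ι)).ne' (congrFun h _)

lemma Module.End.maxGenEigenspace_le_eigenspace {R M : Type*} [CommRing R] [AddCommGroup M]
    [Module R M] {f : Module.End R M} {μ : R}
    (h : ∀ y, (f - μ • 1) ((f - μ • 1) y) = 0 → (f - μ • 1) y = 0) :
    f.maxGenEigenspace μ ≤ f.eigenspace μ := by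
  set g := f - μ • 1
  have hpow : ∀ (k : ℕ) y, (g ^ k) y = 0 → g y = 0 := by
    intro k
    induction k with
    | zero => intro y hy; rw [pow_zero, Module.End.one_apply] at hy; rw [hy, map_zero]
    | succ k ih => exact fun y hy => h y (ih _ (by rwa [pow_succ, Module.End.mul_apply] at hy))
  intro y hy
  obtain ⟨k, hk⟩ := (Module.End.mem_maxGenEigenspace f μ y).1 hy
  simpa [g, sub_eq_zero, Module.End.mem_eigenspace_iff] using hpow k y hk

namespace Matrix

section Nonneg

variable {m n R : Type*} [Fintype n] [Semiring R] [PartialOrder R] [IsOrderedRing R]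

lemma mulVec_nonneg {A : Matrix m n R} (hA : ∀ i j, 0 ≤ A i j) {v : n → R} (hv : 0 ≤ v) :
    0 ≤ A *ᵥ v :=
  fun i => dotProduct_nonneg_of_nonneg (hA i) hv

lemma apply_mul_le_mulVec_apply {A : Matrix m n R} (hA : ∀ i j, 0 ≤ A i j) {v : n → R}
    (hv : 0 ≤ v) (i : m) (j : n) : A i j * v j ≤ (A *ᵥ v) i :=
  Finset.single_le_sum (f := fun k => A i k * v k) (fun k _ => mul_nonneg (hA i k) (hv k))
    (Finset.mem_univ j)

lemma mulVec_pos {B : Matrix m n ℝ} (hB : ∀ i j, 0 < B i j) {w : n → ℝ}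
    (hw : 0 ≤ w) (hw0 : w ≠ 0) (i : m) : 0 < (B *ᵥ w) i := by
  obtain ⟨j, hj⟩ := Function.ne_iff.1 hw0
  exact (mul_pos (hB i j) ((hw j).lt_of_ne' hj)).trans_le
    (apply_mul_le_mulVec_apply (fun i j => (hB i j).le) hw i j)

lemma dotProduct_pos_of_pos [Nonempty n] {u x : n → ℝ} (hu : ∀ i, 0 < u i)
    (hx : ∀ i, 0 < x i) : 0 < u ⬝ᵥ x :=
  Finset.sum_pos (fun i _ => mul_pos (hu i) (hx i)) Finset.univ_nonempty

end Nonneg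

variable {ι : Type*} [Fintype ι]

lemma isRoot_charpoly_iff {K : Type*} [CommRing K] [IsDomain K] [DecidableEq ι]
    (A : Matrix ι ι K) (μ : K) : A.charpoly.IsRoot μ ↔ ∃ v ≠ 0, A *ᵥ v = μ • v := by
  rw [← charpoly_toLin', ← Module.End.hasEigenvalue_iff_isRoot_charpoly,
    Module.End.hasEigenvalue_iff, Submodule.ne_bot_iff]
  simp only [Module.End.mem_eigenspace_iff, toLin'_apply]
  tauto

section CollatzWielandt

variable {A : Matrix ι ι ℝ}

def collatzWielandtSet (A : Matrix ι ι ℝ) : Set ℝ :=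
  {r | 0 ≤ r ∧ ∃ x ∈ stdSimplex ℝ ι, r • x ≤ A *ᵥ x}

def perronRoot (A : Matrix ι ι ℝ) : ℝ :=
  sSup (collatzWielandtSet A)

lemma mem_collatzWielandtSet_of_smul_le {r : ℝ} (hr : 0 ≤ r) {x : ι → ℝ} (hx : 0 ≤ x)
    (hx0 : x ≠ 0) (h : r • x ≤ A *ᵥ x) : r ∈ collatzWielandtSet A := by
  have hs : 0 < ∑ i, x i := by
    obtain ⟨j, hj⟩ := Function.ne_iff.1 hx0
    exact Finset.sum_pos' (fun i _ => hx i) ⟨j, Finset.mem_univ j, (hx j).lt_of_ne' hj⟩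
  refine ⟨hr, (∑ i, x i)⁻¹ • x, ⟨fun i => ?_, ?_⟩, ?_⟩
  · exact mul_nonneg (inv_nonneg.2 hs.le) (hx i)
  · simp [← Finset.mul_sum, hs.ne']
  · rw [mulVec_smul, smul_comm]
    exact smul_le_smul_of_nonneg_left h (inv_nonneg.2 hs.le)

lemma collatzWielandtSet_subset_Icc (hA : ∀ i j, 0 ≤ A i j) :
    collatzWielandtSet A ⊆ Set.Icc 0 (∑ i, ∑ j, A i j) := by
  rintro r ⟨hr, x, hx, hrx⟩
  refine ⟨hr, ?_⟩
  calc r = ∑ i, r * x i := by rw [← Finset.mul_sum, hx.2, mul_one]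
    _ ≤ ∑ i, ∑ j, A i j * x j := Finset.sum_le_sum fun i _ => hrx i
    _ ≤ ∑ i, ∑ j, A i j := by
      gcongr with i _ j _
      exact mul_le_of_le_one_right (hA i j) (mem_Icc_of_mem_stdSimplex hx j).2

lemma isCompact_collatzWielandtSet (hA : ∀ i j, 0 ≤ A i j) :
    IsCompact (collatzWielandtSet A) := by
  have hK : IsCompact ((Set.Icc 0 (∑ i, ∑ j, A i j) ×ˢ stdSimplex ℝ ι) ∩
      {p : ℝ × (ι → ℝ) | p.1 • p.2 ≤ A *ᵥ p.2}) :=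
    (isCompact_Icc.prod (isCompact_stdSimplex ℝ ι)).inter_right
      (isClosed_le (by fun_prop) (by fun_prop))
  convert hK.image continuous_fst
  ext r
  constructor
  · intro hr
    obtain ⟨x, hx, hrx⟩ := hr.2
    exact ⟨(r, x), ⟨⟨collatzWielandtSet_subset_Icc hA hr, hx⟩, hrx⟩, rfl⟩
  · rintro ⟨⟨r, x⟩, ⟨⟨hr, hx⟩, hrx⟩, rfl⟩
    exact ⟨hr.1, x, hx, hrx⟩

lemma le_perronRoot (hA : ∀ i j, 0 ≤ A i j) {r : ℝ} (hr : 0 ≤ r) {x : ι → ℝ} (hx : 0 ≤ x)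
    (hx0 : x ≠ 0) (h : r • x ≤ A *ᵥ x) : r ≤ perronRoot A :=
  le_csSup (isCompact_collatzWielandtSet hA).bddAbove
    (mem_collatzWielandtSet_of_smul_le hr hx hx0 h)

lemma perronRoot_mem_collatzWielandtSet [Nonempty ι] (hA : ∀ i j, 0 ≤ A i j) :
    perronRoot A ∈ collatzWielandtSet A :=
  (isCompact_collatzWielandtSet hA).sSup_mem
    ⟨0, mem_collatzWielandtSet_of_smul_le le_rfl zero_le_one one_ne_zero
      (by simpa using mulVec_nonneg hA zero_le_one)⟩

end CollatzWielandt

variable [DecidableEq ι]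

lemma pow_mulVec_eq_pow_smul {R : Type*} [CommSemiring R] {A : Matrix ι ι R} {x : ι → R} {r : R}
    (h : A *ᵥ x = r • x) (k : ℕ) : (A ^ k) *ᵥ x = r ^ k • x := by
  induction k with
  | zero => simp
  | succ k ih => rw [pow_succ', ← mulVec_mulVec, ih, mulVec_smul, h, smul_smul, pow_succ]

variable {A : Matrix ι ι ℝ}

lemma exists_pos_sum_pow (hA : ∀ i j, 0 ≤ A i j) (hconn : ∀ i j, ∃ k, 0 < (A ^ k) i j) :
    ∃ N, ∀ i j, 0 < (∑ k ∈ Finset.range N, A ^ k) i j := by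
  choose k hk using hconn
  obtain ⟨K, hK⟩ := Finite.bddAbove_range fun p : ι × ι => k p.1 p.2
  refine ⟨K + 1, fun i j => ?_⟩
  have hkN : k i j ∈ Finset.range (K + 1) := Finset.mem_range_succ_iff.2 (hK ⟨(i, j), rfl⟩)
  rw [sum_apply]
  exact (hk i j).trans_le (Finset.single_le_sum (fun l _ => pow_apply_nonneg hA l i j) hkN)

lemma pos_of_mulVec_eq_smul (hA : ∀ i j, 0 ≤ A i j) (hconn : ∀ i j, ∃ k, 0 < (A ^ k) i j)
    {x : ι → ℝ} {r : ℝ} (hx : 0 ≤ x) (hx0 : x ≠ 0) (hAx : A *ᵥ x = r • x) (i : ι) :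
    0 < x i := by
  obtain ⟨j, hj⟩ := Function.ne_iff.1 hx0
  obtain ⟨k, hk⟩ := hconn i j
  have hpos : 0 < r ^ k * x i := by
    simpa [pow_mulVec_eq_pow_smul hAx] using (mul_pos hk ((hx j).lt_of_ne' hj)).trans_le
      (apply_mul_le_mulVec_apply (pow_apply_nonneg hA k) hx i j)
  exact (hx i).lt_of_ne' fun h => by simp [h] at hpos

lemma eq_smul_of_mulVec_eq_smul [Nonempty ι] (hA : ∀ i j, 0 ≤ A i j)
    (hconn : ∀ i j, ∃ k, 0 < (A ^ k) i j) {x y : ι → ℝ} {r : ℝ} (hx : ∀ i, 0 < x i)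
    (hAx : A *ᵥ x = r • x) (hAy : A *ᵥ y = r • y) : ∃ c : ℝ, y = c • x := by
  -- `y - c • x` is a nonnegative eigenvector with a zero entry for the critical ratio `c`
  obtain ⟨i₀, hi₀⟩ := Finite.exists_min fun i => y i / x i
  set c := y i₀ / x i₀
  refine ⟨c, by_contra fun hne => ?_⟩
  have hz : 0 ≤ y - c • x := fun i => by
    simpa [sub_nonneg] using (le_div_iff₀ (hx i)).1 (hi₀ i)
  have hAz : A *ᵥ (y - c • x) = r • (y - c • x) := by
    rw [mulVec_sub, mulVec_smul, hAx, hAy, smul_sub, smul_comm]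
  have hzi₀ : (y - c • x) i₀ = 0 := by simp [c, div_mul_cancel₀ _ (hx i₀).ne']
  exact (pos_of_mulVec_eq_smul hA hconn hz (sub_ne_zero.2 hne) hAz i₀).ne' hzi₀

lemma mulVec_eq_perronRoot_smul_of_le [Nonempty ι] (hA : ∀ i j, 0 ≤ A i j)
    (hconn : ∀ i j, ∃ k, 0 < (A ^ k) i j) {x : ι → ℝ} (hx : 0 ≤ x) (hx0 : x ≠ 0)
    (h : perronRoot A • x ≤ A *ᵥ x) : A *ᵥ x = perronRoot A • x := by
  set r := perronRoot A
  by_contra hne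
  obtain ⟨N, hB⟩ := exists_pos_sum_pow hA hconn
  set B := ∑ k ∈ Finset.range N, A ^ k
  have hBA : Commute B A := Commute.sum_left _ _ _ fun k _ => (Commute.refl A).pow_left k
  have hAy : A *ᵥ (B *ᵥ x) = r • (B *ᵥ x) + B *ᵥ (A *ᵥ x - r • x) := by
    rw [mulVec_sub, mulVec_smul, mulVec_mulVec, mulVec_mulVec, hBA.eq]
    abel
  have hy := mulVec_pos hB hx hx0
  obtain ⟨ε, hε, hεy⟩ := exists_pos_smul_le (B *ᵥ x)
    (mulVec_pos hB (sub_nonneg.2 h) (sub_ne_zero.2 hne))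
  have hr : 0 ≤ r := (perronRoot_mem_collatzWielandtSet hA).1
  have : r + ε ≤ r := le_perronRoot hA (by positivity) (fun i => (hy i).le)
    (ne_zero_of_forall_pos hy) (by rw [add_smul, hAy]; exact add_le_add_right hεy _)
  linarith

lemma exists_pos_mulVec_eq_perronRoot_smul [Nonempty ι] (hA : ∀ i j, 0 ≤ A i j)
    (hconn : ∀ i j, ∃ k, 0 < (A ^ k) i j) :
    ∃ x : ι → ℝ, (∀ i, 0 < x i) ∧ A *ᵥ x = perronRoot A • x := by
  obtain ⟨-, x, hx, hAx⟩ := perronRoot_mem_collatzWielandtSet hA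
  have hx0 : x ≠ 0 := fun h0 => by simpa [h0] using hx.2
  have hAx := mulVec_eq_perronRoot_smul_of_le hA hconn hx.1 hx0 hAx
  exact ⟨x, pos_of_mulVec_eq_smul hA hconn hx.1 hx0 hAx, hAx⟩

lemma pos_of_mulVec_eq_smul_of_pow_apply_pos (hA : ∀ i j, 0 ≤ A i j) {x : ι → ℝ}
    (hx : ∀ i, 0 < x i) {r : ℝ} (hAx : A *ᵥ x = r • x) {i : ι} {k : ℕ} (hk : 1 ≤ k)
    (hAk : 0 < (A ^ k) i i) : 0 < r := by
  have hr : 0 ≤ r := by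
    simpa [hAx, (hx i).le, le_mul_iff_one_le_left, mul_nonneg_iff_of_pos_right (hx i)] using
      mulVec_nonneg hA (fun j => (hx j).le) i
  have hrk : 0 < r ^ k * x i := by
    simpa [pow_mulVec_eq_pow_smul hAx] using (mul_pos hAk (hx i)).trans_le
      (apply_mul_le_mulVec_apply (pow_apply_nonneg hA k) (fun j => (hx j).le) i i)
  refine hr.lt_of_ne' fun h0 => ?_
  simp [h0, zero_pow (by omega : k ≠ 0)] at hrk

lemma norm_le_perronRoot (hA : ∀ i j, 0 ≤ A i j) {μ : ℂ}
    (hμ : (A.map fun a => (a : ℂ)).charpoly.IsRoot μ) : ‖μ‖ ≤ perronRoot A := by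
  obtain ⟨v, hv0, hAv⟩ := (isRoot_charpoly_iff _ μ).1 hμ
  refine le_perronRoot hA (norm_nonneg μ) (fun i => norm_nonneg (v i))
    (fun h0 => hv0 (funext fun i => norm_eq_zero.1 (congrFun h0 i))) fun i => ?_
  calc ‖μ‖ * ‖v i‖ = ‖∑ j, (A i j : ℂ) * v j‖ := by
        rw [← norm_mul, ← smul_eq_mul, ← Pi.smul_apply, ← hAv]; rfl
    _ ≤ ∑ j, ‖(A i j : ℂ) * v j‖ := norm_sum_le _ _
    _ = (A *ᵥ fun j => ‖v j‖) i := by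
        simp [mulVec, dotProduct, abs_of_nonneg (hA i _)]

lemma exists_pos_vecMul_eq_smul [Nonempty ι] (hA : ∀ i j, 0 ≤ A i j)
    (hconn : ∀ i j, ∃ k, 0 < (A ^ k) i j) {x : ι → ℝ} (hx : ∀ i, 0 < x i) {r : ℝ}
    (hAx : A *ᵥ x = r • x) : ∃ u : ι → ℝ, (∀ i, 0 < u i) ∧ u ᵥ* A = r • u := by
  obtain ⟨u, hu, huA⟩ := exists_pos_mulVec_eq_perronRoot_smul (A := Aᵀ) (fun i j => hA j i)
    fun i j => (hconn j i).imp fun k hk => by rwa [← transpose_pow]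
  rw [mulVec_transpose] at huA
  have h : perronRoot Aᵀ * (u ⬝ᵥ x) = r * (u ⬝ᵥ x) := by
    rw [← smul_eq_mul, ← smul_dotProduct, ← huA, ← dotProduct_mulVec, hAx, dotProduct_smul,
      smul_eq_mul]
  rw [mul_left_inj' (dotProduct_pos_of_pos hu hx).ne'] at h
  exact ⟨u, hu, h ▸ huA⟩

lemma rootMultiplicity_charpoly_eq_one [Nonempty ι] (hA : ∀ i j, 0 ≤ A i j)
    (hconn : ∀ i j, ∃ k, 0 < (A ^ k) i j) {x u : ι → ℝ} {r : ℝ} (hx : ∀ i, 0 < x i)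
    (hu : ∀ i, 0 < u i) (hAx : A *ᵥ x = r • x) (huA : u ᵥ* A = r • u) :
    A.charpoly.rootMultiplicity r = 1 := by
  set f : Module.End ℝ (ι → ℝ) := toLin' A
  have hsub : ∀ y, (f - r • 1) y = A *ᵥ y - r • y := fun y => by simp [f]
  have heig : f.eigenspace r ≤ ℝ ∙ x := fun y hy => by
    obtain ⟨c, rfl⟩ := eq_smul_of_mulVec_eq_smul hA hconn hx hAx
      (Module.End.mem_eigenspace_iff.1 hy)
    exact Submodule.smul_mem _ c (Submodule.mem_span_singleton_self x)
  have hsq : ∀ y, (f - r • 1) ((f - r • 1) y) = 0 → (f - r • 1) y = 0 := by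
    intro y hy
    rw [hsub, hsub, sub_eq_zero] at hy
    obtain ⟨c, hc⟩ := eq_smul_of_mulVec_eq_smul hA hconn hx hAx hy
    have hu0 : u ⬝ᵥ (A *ᵥ y - r • y) = 0 := by
      rw [dotProduct_sub, dotProduct_mulVec, huA, dotProduct_smul, smul_dotProduct, sub_self]
    rw [hc, dotProduct_smul, smul_eq_mul, mul_eq_zero,
      or_iff_left (dotProduct_pos_of_pos hu hx).ne'] at hu0
    rw [hsub, hc, hu0, zero_smul]
  have hmax : f.maxGenEigenspace r = ℝ ∙ x :=
    le_antisymm ((Module.End.maxGenEigenspace_le_eigenspace hsq).trans heig)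
      ((Submodule.span_singleton_le_iff_mem _ _).2 (Module.End.eigenspace_le_maxGenEigenspace
        (Module.End.mem_eigenspace_iff.2 (by rwa [toLin'_apply]))))
  rw [← charpoly_toLin', ← LinearMap.finrank_maxGenEigenspace_eq, hmax,
    finrank_span_singleton (ne_zero_of_forall_pos hx)]

end Matrix

/-- Perron–Frobenius. For a nonnegative irreducible matrix `M ∈ ℝ^{n×n}`,
`n ≥ 2`: (i) the spectral radius `r = ρ(M)` (the maximum modulus of the complex eigenvalues,
i.e. of the roots of the characteristic polynomial) is strictly positive and is itself an
eigenvalue of `M`; (ii) there is an entrywise strictly positive eigenvector `x` with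
`Mx = ρ(M)x`; (iii) `ρ(M)` is an algebraically simple eigenvalue (a simple root of the
characteristic polynomial). -/
theorem perron_frobenius_irreducible (n : ℕ) (hn : 2 ≤ n) (M : Matrix (Fin n) (Fin n) ℝ)
    (hnonneg : ∀ i j, 0 ≤ M i j)
    (hirr : ∀ i j, ∃ k : ℕ, 1 ≤ k ∧ 0 < (M ^ k) i j) :
    ∃ r : ℝ, 0 < r ∧
      (∀ μ : ℂ, ((M.map fun a => (a : ℂ)).charpoly).IsRoot μ → ‖μ‖ ≤ r) ∧
      ((M.map fun a => (a : ℂ)).charpoly).IsRoot (r : ℂ) ∧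
      (∃ x : Fin n → ℝ, (∀ i, 0 < x i) ∧ M *ᵥ x = r • x) ∧
      rootMultiplicity ((r : ℂ)) ((M.map fun a => (a : ℂ)).charpoly) = 1 := by
  have : Nonempty (Fin n) := ⟨⟨0, by omega⟩⟩
  have hconn : ∀ i j, ∃ k, 0 < (M ^ k) i j := fun i j => (hirr i j).imp fun _ hk => hk.2
  have hchar : (M.map fun a => (a : ℂ)).charpoly = M.charpoly.map Complex.ofRealHom :=
    M.charpoly_map Complex.ofRealHom
  obtain ⟨x, hx, hMx⟩ := exists_pos_mulVec_eq_perronRoot_smul hnonneg hconn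
  obtain ⟨u, hu, huM⟩ := exists_pos_vecMul_eq_smul hnonneg hconn hx hMx
  obtain ⟨k, hk, hMk⟩ := hirr (Classical.arbitrary _) (Classical.arbitrary _)
  refine ⟨perronRoot M, pos_of_mulVec_eq_smul_of_pow_apply_pos hnonneg hx hMx hk hMk,
    fun μ hμ => norm_le_perronRoot hnonneg hμ, ?_, ⟨x, hx, hMx⟩, ?_⟩
  · rw [hchar]
    exact IsRoot.map ((isRoot_charpoly_iff M _).2 ⟨x, ne_zero_of_forall_pos hx, hMx⟩)
  · rw [hchar]
    exact (eq_rootMultiplicity_map (f := Complex.ofRealHom) Complex.ofReal_injective _).symm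
      |>.trans (rootMultiplicity_charpoly_eq_one hnonneg hconn hx hu hMx huM)
end
end

section
/- Let X, E ∈ ℂ^{n×n} and let λ be an algebraically simple eigenvalue of X (a simple root of the characteristic polynomial), with left eigenvector w (wᵀX = λwᵀ, w ≠ 0) and right eigenvector v (Xv = λv, v ≠ 0). Then wᵀv ≠ 0, and for every ε > 0 there exists δ > 0 such that for every t ∈ ℂ with |t| < δ, the matrix X + tE has exactly one eigenvalue λ(t) satisfying |λ(t) − λ − t·(wᵀEv)/(wᵀv)| ≤ |t|ε. -/
/-!
Write `M = λ - X`. Since `λ` is a simple root of `χ_X`, geometric multiplicity one makes the left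
and right eigenspaces the lines through `w` and `v`; as `M` is singular, the columns and rows of
`adj M` lie in them, so `adj M = κ v wᵀ`. By Jacobi's formula, `F(t, z) = χ_{X+tE}(z)` has partial
derivatives `∂_z F = tr (adj M) = κ wᵀv = χ_X'(λ) ≠ 0` and `∂_t F = -tr (adj M E) = -κ wᵀEv` at
`(0, λ)`. The implicit function theorem then yields a root `z(t)` of `F(t, ·)`, unique near `λ`, with
`z'(0) = wᵀEv / wᵀv`.
-/

open Topology Matrix Polynomial

theorem Polynomial.eval_derivative_ne_zero_of_rootMultiplicity_eq_one {R : Type*} [CommRing R]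
    {p : R[X]} {t : R} (h : rootMultiplicity t p = 1) : p.derivative.eval t ≠ 0 := by
  have hp : p ≠ 0 := by rintro rfl; simp at h
  have hroot : p.IsRoot t := (rootMultiplicity_pos hp).1 (by omega)
  intro h'
  have := (one_lt_rootMultiplicity_iff_isRoot hp).2 ⟨hroot, h'⟩
  omega

namespace Matrix

variable {n : Type*} [Fintype n] [DecidableEq n]

section CommRing

variable {R : Type*} [CommRing R]

theorem scalar_sub_mulVec_eq_zero_iff (X : Matrix n n R) (lam : R) (x : n → R) :
    (scalar n lam - X) *ᵥ x = 0 ↔ X *ᵥ x = lam • x := by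
  rw [sub_mulVec, sub_eq_zero, eq_comm, scalar_apply, ← smul_one_eq_diagonal, smul_mulVec,
    one_mulVec]

theorem det_updateRow_eq_vecMul_adjugate (A : Matrix n n R) (i : n) (b : n → R) :
    (A.updateRow i b).det = (b ᵥ* adjugate A) i := by
  rw [← cramer_transpose_apply, cramer_eq_adjugate_mulVec, ← adjugate_transpose, mulVec_transpose]

theorem sum_det_updateRow_eq_trace_adjugate_mul (A B : Matrix n n R) :
    ∑ i, (A.updateRow i (B i)).det = trace (adjugate A * B) := by
  simp only [det_updateRow_eq_vecMul_adjugate, trace, diag, mul_apply, vecMul, dotProduct]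
  exact Finset.sum_comm.trans
    (Finset.sum_congr rfl fun _ _ => Finset.sum_congr rfl fun _ _ => mul_comm _ _)

end CommRing

section Field

variable {K : Type*} [Field K]

theorem exists_smul_eq_of_mulVec_eq_smul {X : Matrix n n K} {lam : K}
    (hsimple : rootMultiplicity lam X.charpoly = 1) {v x : n → K} (hv : v ≠ 0)
    (hv_eig : X *ᵥ v = lam • v) (hx : X *ᵥ x = lam • x) : ∃ a : K, a • v = x := by
  let S := Module.End.eigenspace (toLin' X) lam
  have hvS : v ∈ S := Module.End.mem_eigenspace_iff.2 (by simpa using hv_eig)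
  have hxS : x ∈ S := Module.End.mem_eigenspace_iff.2 (by simpa using hx)
  have hv0 : (⟨v, hvS⟩ : S) ≠ 0 := by simpa using hv
  have hS : Module.finrank K S = 1 := by
    refine le_antisymm ?_ (Module.finrank_pos_iff_exists_ne_zero.2 ⟨_, hv0⟩)
    simpa [hsimple, charpoly_toLin'] using LinearMap.finrank_eigenspace_le (toLin' X) lam
  obtain ⟨a, ha⟩ := (finrank_eq_one_iff_of_nonzero' _ hv0).1 hS ⟨x, hxS⟩
  exact ⟨a, congrArg Subtype.val ha⟩

theorem exists_adjugate_eq_smul_vecMulVec {M : Matrix n n K} (hdet : M.det = 0) {v w : n → K}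
    (hv : ∀ x, M *ᵥ x = 0 → ∃ a : K, a • v = x) (hw : ∀ y, y ᵥ* M = 0 → ∃ b : K, b • w = y) :
    ∃ κ : K, adjugate M = κ • vecMulVec v w := by
  choose a ha using fun j => hv (adjugate M *ᵥ Pi.single j 1)
    (by rw [mulVec_mulVec, mul_adjugate, hdet, zero_smul, zero_mulVec])
  choose b hb using fun i => hw (Pi.single i 1 ᵥ* adjugate M)
    (by rw [vecMul_vecMul, adjugate_mul, hdet, zero_smul, vecMul_zero])
  have hcol : ∀ i j, adjugate M i j = a j * v i := fun i j => by
    simpa using (congrFun (ha j) i).symm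
  have hrow : ∀ i j, adjugate M i j = b i * w j := fun i j => by
    simpa using (congrFun (hb i) j).symm
  by_cases hv0 : v = 0
  · exact ⟨0, by ext i j; simp [hcol, hv0]⟩
  obtain ⟨i₀, hi₀ : v i₀ ≠ 0⟩ := Function.ne_iff.1 hv0
  refine ⟨b i₀ / v i₀, ?_⟩
  ext i j
  have h := (hcol i₀ j).symm.trans (hrow i₀ j)
  simp only [smul_apply, vecMulVec_apply, smul_eq_mul, hcol]
  field_simp
  linear_combination v i * h

theorem exists_adjugate_scalar_sub_eq_smul_vecMulVec {X : Matrix n n K} {lam : K}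
    (hsimple : rootMultiplicity lam X.charpoly = 1) {v w : n → K} (hv : v ≠ 0)
    (hv_eig : X *ᵥ v = lam • v) (hw : w ≠ 0) (hw_eig : w ᵥ* X = lam • w) :
    ∃ κ : K, adjugate (scalar n lam - X) = κ • vecMulVec v w := by
  have hsimple_t : rootMultiplicity lam Xᵀ.charpoly = 1 := by rwa [charpoly_transpose]
  refine exists_adjugate_eq_smul_vecMulVec ?_ (fun x hx => ?_) (fun y hy => ?_)
  · rw [← eval_charpoly]
    exact (rootMultiplicity_pos'.1 (hsimple ▸ one_pos)).2
  · exact exists_smul_eq_of_mulVec_eq_smul hsimple hv hv_eig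
      ((scalar_sub_mulVec_eq_zero_iff X lam x).1 hx)
  · rw [← mulVec_transpose, transpose_sub, scalar_apply, diagonal_transpose, ← scalar_apply,
      scalar_sub_mulVec_eq_zero_iff] at hy
    exact exists_smul_eq_of_mulVec_eq_smul hsimple_t hw (by rwa [mulVec_transpose]) hy

end Field

section Analysis

variable {𝕜 : Type*} [NontriviallyNormedField 𝕜]

def detContinuousMultilinearMap : ContinuousMultilinearMap 𝕜 (fun _ : n => n → 𝕜) 𝕜 :=
  ⟨(detRowAlternating : (n → 𝕜) [⋀^n]→ₗ[𝕜] 𝕜).toMultilinearMap, continuous_id.matrix_det⟩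

theorem detContinuousMultilinearMap_apply (M : n → n → 𝕜) :
    detContinuousMultilinearMap M = (of M).det := rfl

theorem linearDeriv_detContinuousMultilinearMap_apply (A H : n → n → 𝕜) :
    detContinuousMultilinearMap.linearDeriv A H = trace (adjugate (of A) * of H) := by
  rw [ContinuousMultilinearMap.linearDeriv_apply, ← sum_det_updateRow_eq_trace_adjugate_mul]
  rfl

theorem hasStrictFDerivAt_eval_charpoly_add_smul (X E : Matrix n n 𝕜) (p : 𝕜 × 𝕜) :
    HasStrictFDerivAt (fun q : 𝕜 × 𝕜 => (X + q.1 • E).charpoly.eval q.2)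
      (-trace (adjugate (scalar n p.2 - (X + p.1 • E)) * E) • .fst 𝕜 𝕜 𝕜 +
        trace (adjugate (scalar n p.2 - (X + p.1 • E))) • .snd 𝕜 𝕜 𝕜) p := by
  set g' : 𝕜 × 𝕜 →L[𝕜] (n → n → 𝕜) :=
    (ContinuousLinearMap.snd 𝕜 𝕜 𝕜).smulRight (of.symm 1) -
      (ContinuousLinearMap.fst 𝕜 𝕜 𝕜).smulRight (of.symm E)
  have hg' : ∀ q : 𝕜 × 𝕜, of (g' q) = q.2 • 1 - q.1 • E := fun q => by ext; simp [g']
  have hg : ∀ q : 𝕜 × 𝕜, of (g' q - of.symm X) = scalar n q.2 - (X + q.1 • E) := fun q => by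
    change of (g' q) - X = _
    rw [hg', scalar_apply, ← smul_one_eq_diagonal]
    abel
  have h := detContinuousMultilinearMap.hasStrictFDerivAt (g' p - of.symm X)
    |>.comp p (g'.hasStrictFDerivAt.sub_const (of.symm X))
  simp only [detContinuousMultilinearMap_apply, hg, ← eval_charpoly] at h
  refine h.congr_fderiv (ContinuousLinearMap.ext fun q => ?_)
  rw [ContinuousLinearMap.comp_apply, linearDeriv_detContinuousMultilinearMap_apply, hg, hg']
  simp only [smul_eq_mul, FunLike.coe_add, FunLike.coe_smul, Pi.add_apply, Pi.smul_apply,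
    ContinuousLinearMap.coe_fst', ContinuousLinearMap.coe_snd', mul_sub, trace_sub,
    Matrix.mul_smul, trace_smul, mul_one]
  ring

theorem trace_adjugate_scalar_sub (X : Matrix n n 𝕜) (z : 𝕜) :
    trace (adjugate (scalar n z - X)) = X.charpoly.derivative.eval z := by
  have h := (hasStrictFDerivAt_eval_charpoly_add_smul X 0 (0, z)).hasFDerivAt.comp_hasDerivAt z
    ((hasDerivAt_const z 0).prodMk (hasDerivAt_id z))
  simp only [smul_zero, add_zero] at h
  simpa using h.unique (Polynomial.hasDerivAt _ _)

end Analysis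

end Matrix

section ImplicitFunction

variable {𝕜 : Type*} [NontriviallyNormedField 𝕜]

theorem ContinuousLinearMap.isInvertible_of_apply_one_ne_zero {f : 𝕜 →L[𝕜] 𝕜} (hf : f 1 ≠ 0) :
    f.IsInvertible :=
  ⟨ContinuousLinearEquiv.unitsEquivAut 𝕜 (Units.mk0 _ hf), ContinuousLinearMap.ext_ring (by simp)⟩

variable [CompleteSpace 𝕜]

theorem exists_hasDerivAt_and_eventually_eq_zero_iff {f : 𝕜 × 𝕜 → 𝕜} {f' : 𝕜 × 𝕜 →L[𝕜] 𝕜}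
    {p : 𝕜 × 𝕜} (hf : HasStrictFDerivAt f f' p) (hfp : f p = 0) (hd : f' (0, 1) ≠ 0) {c : 𝕜}
    (hc : f' (1, c) = 0) :
    ∃ ψ : 𝕜 → 𝕜, HasDerivAt ψ c p.1 ∧ ∀ᶠ q in 𝓝 p, f q = 0 ↔ ψ q.1 = q.2 := by
  have hinv : (f' ∘L .inr 𝕜 𝕜 𝕜).IsInvertible :=
    ContinuousLinearMap.isInvertible_of_apply_one_ne_zero (by simpa using hd)
  refine ⟨hf.implicitFunctionOfProdDomain hinv, ?_, ?_⟩
  · refine (hf.hasStrictFDerivAt_implicitFunctionOfProdDomain hinv).hasStrictDerivAt.hasDerivAt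
      |>.congr_deriv ?_
    have h : f' (1, 0) = -f' (0, c) := by
      rw [eq_neg_iff_add_eq_zero, ← map_add, Prod.mk_add_mk, add_zero, zero_add, hc]
    simp [hinv.inverse_apply_eq, h]
  · simpa [hfp] using hf.eventually_apply_eq_iff_implicitFunctionOfProdDomain hinv

theorem exists_unique_eq_zero_near_of_hasStrictFDerivAt {f : 𝕜 × 𝕜 → 𝕜}
    {f' : 𝕜 × 𝕜 →L[𝕜] 𝕜} {z₀ c : 𝕜} (hf : HasStrictFDerivAt f f' (0, z₀)) (hf0 : f (0, z₀) = 0)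
    (hd : f' (0, 1) ≠ 0) (hc : f' (1, c) = 0) {ε : ℝ} (hε : 0 < ε) :
    ∃ δ : ℝ, 0 < δ ∧ ∀ t : 𝕜, ‖t‖ < δ →
      ∃! z : 𝕜, f (t, z) = 0 ∧ ‖z - z₀ - t * c‖ ≤ ‖t‖ * ε := by
  obtain ⟨ψ, hψ, hiff⟩ := exists_hasDerivAt_and_eventually_eq_zero_iff hf hf0 hd hc
  have hψ0 : ψ 0 = z₀ := hiff.self_of_nhds.1 hf0
  obtain ⟨r, hr, hball⟩ := Metric.eventually_nhds_iff.1 hiff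
  obtain ⟨δ, hδ, hlin⟩ := Metric.eventually_nhds_iff.1 ((hasDerivAt_iff_isLittleO.1 hψ).def hε)
  have hK : 0 < ε + ‖c‖ + 1 := by positivity
  refine ⟨min δ (r / (ε + ‖c‖ + 1)), lt_min hδ (div_pos hr hK), fun t ht => ?_⟩
  have htr : ‖t‖ * (ε + ‖c‖ + 1) < r := (lt_div_iff₀ hK).1 (ht.trans_le (min_le_right _ _))
  have hnear : ∀ z, ‖z - z₀ - t * c‖ ≤ ‖t‖ * ε → (f (t, z) = 0 ↔ ψ t = z) := by
    intro z hz
    have hz₀ : ‖z - z₀‖ < r :=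
      calc ‖z - z₀‖ = ‖(z - z₀ - t * c) + t * c‖ := by rw [sub_add_cancel]
        _ ≤ ‖t‖ * ε + ‖t‖ * ‖c‖ := (norm_add_le _ _).trans (by rw [norm_mul]; linarith)
        _ < r := by nlinarith [norm_nonneg t]
    have ht₀ : ‖t‖ < r := by nlinarith [norm_nonneg t, norm_nonneg c]
    exact hball (max_lt (by simpa using ht₀) (by simpa [dist_eq_norm] using hz₀))
  have hψt : ‖ψ t - z₀ - t * c‖ ≤ ‖t‖ * ε := by
    simpa [hψ0, mul_comm] using hlin (by simpa using ht.trans_le (min_le_left _ _))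
  exact ⟨ψ t, ⟨(hnear _ hψt).2 rfl, hψt⟩, fun z hz => ((hnear z hz.2).1 hz.1).symm⟩

end ImplicitFunction

/-- eigenvalue perturbation for a simple eigenvalue. Let `λ` be an
algebraically simple eigenvalue of `X ∈ ℂ^{n×n}` with left eigenvector `w` and right
eigenvector `v`. Then `wᵀv ≠ 0`, and for every `ε > 0` there is `δ > 0` such that for all
`t ∈ ℂ` with `|t| < δ` the matrix `X + tE` has exactly one eigenvalue `z` with
`|z - λ - t (wᵀEv)/(wᵀv)| ≤ |t| ε`. -/
theorem simple_eigenvalue_perturbation (n : ℕ) (X E : Matrix (Fin n) (Fin n) ℂ)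
    (lam : ℂ) (w v : Fin n → ℂ)
    (hsimple : rootMultiplicity lam X.charpoly = 1)
    (hw : w ≠ 0) (hw_eig : w ᵥ* X = lam • w)
    (hv : v ≠ 0) (hv_eig : X *ᵥ v = lam • v) :
    w ⬝ᵥ v ≠ 0 ∧
    ∀ ε : ℝ, 0 < ε → ∃ δ : ℝ, 0 < δ ∧ ∀ t : ℂ, ‖t‖ < δ →
      ∃! z : ℂ, ((X + t • E).charpoly).IsRoot z ∧
        ‖z - lam - t * (w ⬝ᵥ (E *ᵥ v)) / (w ⬝ᵥ v)‖ ≤ ‖t‖ * ε := by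
  obtain ⟨κ, hκ⟩ := exists_adjugate_scalar_sub_eq_smul_vecMulVec hsimple hv hv_eig hw hw_eig
  have hd : κ * (w ⬝ᵥ v) = X.charpoly.derivative.eval lam := by
    rw [← trace_adjugate_scalar_sub, hκ, trace_smul, trace_vecMulVec, dotProduct_comm, smul_eq_mul]
  have hd0 : κ * (w ⬝ᵥ v) ≠ 0 := hd ▸ eval_derivative_ne_zero_of_rootMultiplicity_eq_one hsimple
  have hwv : w ⬝ᵥ v ≠ 0 := right_ne_zero_of_mul hd0
  refine ⟨hwv, fun ε hε => ?_⟩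
  have hf := hasStrictFDerivAt_eval_charpoly_add_smul X E (0, lam)
  simp only [zero_smul, add_zero, hκ, smul_mul, trace_smul, vecMulVec_mul, trace_vecMulVec,
    dotProduct_comm v, ← dotProduct_mulVec, smul_eq_mul] at hf
  have hroot : X.charpoly.IsRoot lam := (rootMultiplicity_pos'.1 (hsimple ▸ one_pos)).2
  obtain ⟨δ, hδ, hδ'⟩ := exists_unique_eq_zero_near_of_hasStrictFDerivAt hf (by simpa using hroot)
    (by simpa using hd0) (c := (w ⬝ᵥ (E *ᵥ v)) / (w ⬝ᵥ v))
    (by simp [mul_assoc, mul_div_cancel₀ _ hwv]) hε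
  exact ⟨δ, hδ, fun t ht => by simpa only [mul_div_assoc, IsRoot.def] using hδ' t ht⟩
end

section
/- Under Assumption 2 and one DGT step with stepsize 0 < α ≤ 1/L₁, the iterates satisfy ‖x_{k+1} − x*‖ ≤ (1 − μα)‖x_k − x*‖ + αL₁‖σ_k − 𝒥σ_k‖ + αL₃‖y_k − 𝒥y_k‖. -/
noncomputable section
open scoped BigOperators

/-- The stacked decision space `ℝⁿ = ℝ^{n₁} × ⋯ × ℝ^{n_N}` with the stacked Euclidean norm
`‖x‖² = Σᵢ ‖xᵢ‖²`. -/
abbrev StackedX (N : ℕ) (nn : Fin N → ℕ) :=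
  PiLp 2 (fun i => EuclideanSpace ℝ (Fin (nn i)))

/-- The stacked aggregate space `ℝ^{Nd}` with the stacked Euclidean norm. -/
abbrev StackedY (N d : ℕ) := PiLp 2 (fun _ : Fin N => EuclideanSpace ℝ (Fin d))

/-- The averaging operator `𝒥 z = 1_N ⊗ ((1/N) Σᵢ zᵢ)`. -/
def Jmap {N d : ℕ} (z : StackedY N d) : StackedY N d :=
  WithLp.toLp 2 (fun _ => (N : ℝ)⁻¹ • ∑ j, z j)

/-- The stacked map `(x,y) ↦ ∇₁f(x,y) + ∇φ(x)(1_N ⊗ (1/N)Σᵢ ∇₂fᵢ(xᵢ,yᵢ))`, where `∇φᵢ(xᵢ)`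
acts as the adjoint (transposed Jacobian) of the derivative of `φᵢ`. -/
def combinedGrad {N d : ℕ} {nn : Fin N → ℕ}
    (φ : ∀ i, EuclideanSpace ℝ (Fin (nn i)) → EuclideanSpace ℝ (Fin d))
    (g1 : ∀ i, EuclideanSpace ℝ (Fin (nn i)) → EuclideanSpace ℝ (Fin d) →
      EuclideanSpace ℝ (Fin (nn i)))
    (g2 : ∀ i, EuclideanSpace ℝ (Fin (nn i)) → EuclideanSpace ℝ (Fin d) →
      EuclideanSpace ℝ (Fin d))
    (x : StackedX N nn) (y : StackedY N d) : StackedX N nn :=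
  WithLp.toLp 2 (fun i => g1 i (x i) (y i) +
    ContinuousLinearMap.adjoint (fderiv ℝ (φ i) (x i)) ((N : ℝ)⁻¹ • ∑ j, g2 j (x j) (y j)))

/-- The stacked map `(x,y) ↦ ∇₂f(x,y) = col(∇₂f₁(x₁,y₁),…,∇₂f_N(x_N,y_N))`. -/
def stackedGrad2 {N d : ℕ} {nn : Fin N → ℕ}
    (g2 : ∀ i, EuclideanSpace ℝ (Fin (nn i)) → EuclideanSpace ℝ (Fin d) →
      EuclideanSpace ℝ (Fin d))
    (x : StackedX N nn) (y : StackedY N d) : StackedY N d :=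
  WithLp.toLp 2 (fun i => g2 i (x i) (y i))

/-!
By the tracking identities, `𝒥σ_k = 1 ⊗ σ(x_k)` and `𝒥y_k` is the average of the `∇₂fᵢ`, so the
chain rule identifies the combined gradient map `G` at `(x_k, 𝒥σ_k)` with `∇f(x_k)`, and
`x_{k+1} - x* = (x_k - α∇f(x_k) - x*) - α(G(x_k, σ_k) - G(x_k, 𝒥σ_k)) - α∇φ(x_k)(y_k - 𝒥y_k)`.
The first term is a gradient step on a `μ`-strongly convex, `L₁`-smooth function, which contracts
by `1 - μα` for `α ≤ 1/L₁`: cocoercivity of `∇f - μ id`, the gradient of the convex and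
`(L₁ - μ)`-smooth function `f - μ/2 ‖·‖²`. The second term is at most `αL₁‖σ_k - 𝒥σ_k‖` by the
Lipschitz assumption on `G`, and the third at most `αL₃‖y_k - 𝒥y_k‖`.
-/

local notation "⟪" x ", " y "⟫" => @inner ℝ _ _ x y

section GradientStep

variable {H : Type*} [NormedAddCommGroup H] [InnerProductSpace ℝ H]

/-- Baillon–Haddad cocoercivity; for `C ≤ 0` it forces `h' x = h' y`. -/
theorem norm_sub_sq_le_mul_inner_of_convex_of_smooth {h : H → ℝ} {h' : H → H} {C : ℝ}
    (hconv : ∀ a b, h b + ⟪h' b, a - b⟫ ≤ h a)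
    (hsmooth : ∀ a b, h a ≤ h b + ⟪h' b, a - b⟫ + C / 2 * ‖a - b‖ ^ 2) (x y : H) :
    ‖h' x - h' y‖ ^ 2 ≤ C * ⟪h' x - h' y, x - y⟫ := by
  set u := h' x - h' y
  -- `x` minimises `h - ⟪h' x, ·⟫`, which is at most its quadratic model at `y + t • u`;
  -- symmetrically for `y` at `x - t • u`
  have key : ∀ t : ℝ, 0 ≤ t → (2 * t - C * t ^ 2) * ‖u‖ ^ 2 ≤ ⟪u, x - y⟫ := by
    intro t ht
    have h1 := hconv (y + t • u) x
    have h2 := hsmooth (y + t • u) y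
    have h3 := hconv (x - t • u) y
    have h4 := hsmooth (x - t • u) x
    simp only [add_sub_cancel_left, sub_sub_cancel_left, norm_neg, norm_smul, Real.norm_eq_abs,
      abs_of_nonneg ht, inner_neg_right, inner_smul_right] at h1 h2 h3 h4
    rw [show y + t • u - x = -(x - y) + t • u by abel, inner_add_right, inner_neg_right,
      inner_smul_right] at h1
    rw [show x - t • u - y = (x - y) - t • u by abel, inner_sub_right, inner_smul_right] at h3
    have huu : ⟪h' x, u⟫ - ⟪h' y, u⟫ = ‖u‖ ^ 2 := by
      rw [← inner_sub_left, real_inner_self_eq_norm_sq]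
    rw [inner_sub_left]
    nlinarith
  rcases lt_or_ge 0 C with hC | hC
  · have h := key C⁻¹ (inv_nonneg.2 hC.le)
    have e : 2 * C⁻¹ - C * C⁻¹ ^ 2 = C⁻¹ := by field_simp; ring
    rw [e] at h
    calc ‖u‖ ^ 2 = C * (C⁻¹ * ‖u‖ ^ 2) := by field_simp
      _ ≤ C * ⟪u, x - y⟫ := mul_le_mul_of_nonneg_left h hC.le
  · have hu : u = 0 := by
      by_contra hu
      have hpos : 0 < ‖u‖ ^ 2 := by positivity
      set t := (‖u‖ * ‖x - y‖ + 1) / ‖u‖ ^ 2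
      have ht : t * ‖u‖ ^ 2 = ‖u‖ * ‖x - y‖ + 1 := div_mul_cancel₀ _ hpos.ne'
      nlinarith [key t (by positivity), real_inner_le_norm u (x - y),
        mul_nonneg (neg_nonneg.2 hC) (mul_nonneg (sq_nonneg t) hpos.le), norm_nonneg u,
        norm_nonneg (x - y)]
    simp [hu]

variable [CompleteSpace H]

theorem le_add_inner_gradient_add_sq_of_lipschitz {F : H → ℝ} (hF : Differentiable ℝ F) {L : ℝ}
    (hlip : ∀ x y, ‖gradient F x - gradient F y‖ ≤ L * ‖x - y‖) (a b : H) :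
    F a ≤ F b + ⟪gradient F b, a - b⟫ + L / 2 * ‖a - b‖ ^ 2 := by
  set w := a - b
  -- the gap to the quadratic upper model, along the segment from `b` to `a`
  let ψ : ℝ → ℝ := fun t => F (b + t • w) - t * ⟪gradient F b, w⟫ - L / 2 * t ^ 2 * ‖w‖ ^ 2
  have hψ : ∀ t, HasDerivAt ψ
      (⟪gradient F (b + t • w) - gradient F b, w⟫ - L * t * ‖w‖ ^ 2) t := by
    intro t
    have hline : HasDerivAt (fun t : ℝ => b + t • w) w t := by
      simpa using ((hasDerivAt_id t).smul_const w).const_add b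
    have hFt := (hF (b + t • w)).hasFDerivAt.comp_hasDerivAt t hline
    rw [← inner_gradient_left] at hFt
    refine ((hFt.sub ((hasDerivAt_id t).mul_const ⟪gradient F b, w⟫)).sub
      (((hasDerivAt_pow 2 t).const_mul (L / 2)).mul_const (‖w‖ ^ 2))).congr_deriv ?_
    rw [inner_sub_left]
    push_cast
    ring
  have hψ_anti : AntitoneOn ψ (Set.Icc 0 1) := by
    have hψ_diff : Differentiable ℝ ψ := fun t => (hψ t).differentiableAt
    refine antitoneOn_of_deriv_nonpos (convex_Icc 0 1) hψ_diff.continuous.continuousOn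
      hψ_diff.differentiableOn fun t ht => ?_
    rw [interior_Icc] at ht
    have hstep : ‖gradient F (b + t • w) - gradient F b‖ ≤ L * (t * ‖w‖) := by
      simpa [norm_smul, abs_of_pos ht.1] using hlip (b + t • w) b
    rw [(hψ t).deriv]
    nlinarith [real_inner_le_norm (gradient F (b + t • w) - gradient F b) w,
      mul_le_mul_of_nonneg_right hstep (norm_nonneg w)]
  have h01 := hψ_anti (by norm_num) (by norm_num) zero_le_one
  simp only [ψ, w, one_smul, zero_smul, add_zero, add_sub_cancel, one_pow, one_mul, mul_one,
    zero_mul, zero_pow two_ne_zero, mul_zero, sub_zero] at h01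
  linarith

variable {F : H → ℝ} {μ L : ℝ}

theorem le_of_strongConvex_of_lipschitz_gradient
    (hsc : ∀ x y, F x ≥ F y + ⟪gradient F y, x - y⟫ + μ / 2 * ‖x - y‖ ^ 2)
    (hlip : ∀ x y, ‖gradient F x - gradient F y‖ ≤ L * ‖x - y‖) {x y : H} (hxy : x ≠ y) :
    μ ≤ L := by
  have hpos : 0 < ‖x - y‖ ^ 2 := by positivity [sub_ne_zero.2 hxy]
  have hmono : μ * ‖x - y‖ ^ 2 ≤ ⟪gradient F x - gradient F y, x - y⟫ := by
    have h := hsc y x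
    rw [← neg_sub x y, inner_neg_right, norm_neg] at h
    rw [inner_sub_left]
    linarith [hsc x y]
  have hcs : ⟪gradient F x - gradient F y, x - y⟫ ≤ L * ‖x - y‖ ^ 2 := by
    calc _ ≤ ‖gradient F x - gradient F y‖ * ‖x - y‖ := real_inner_le_norm _ _
      _ ≤ L * ‖x - y‖ * ‖x - y‖ := by gcongr; exact hlip x y
      _ = L * ‖x - y‖ ^ 2 := by ring
  exact le_of_mul_le_mul_right (hmono.trans hcs) hpos

theorem norm_sub_smul_gradient_sub_le (hF : Differentiable ℝ F)
    (hsc : ∀ x y, F x ≥ F y + ⟪gradient F y, x - y⟫ + μ / 2 * ‖x - y‖ ^ 2)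
    (hlip : ∀ x y, ‖gradient F x - gradient F y‖ ≤ L * ‖x - y‖) {xstar : H}
    (hstar : gradient F xstar = 0) {α : ℝ} (hα : 0 ≤ α) (hαL : α * L ≤ 1) (x : H) :
    ‖x - α • gradient F x - xstar‖ ≤ (1 - μ * α) * ‖x - xstar‖ := by
  rcases eq_or_ne x xstar with rfl | hx
  · simp [hstar]
  have hμL := le_of_strongConvex_of_lipschitz_gradient hsc hlip hx
  -- `F - μ/2 ‖·‖²` is convex and `(L - μ)`-smooth
  have hquad : ∀ a b : H, ⟪gradient F b - μ • b, a - b⟫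
      = ⟪gradient F b, a - b⟫ + μ / 2 * ‖a - b‖ ^ 2 - (μ / 2 * ‖a‖ ^ 2 - μ / 2 * ‖b‖ ^ 2) := by
    intro a b
    rw [inner_sub_left, real_inner_smul_left, inner_sub_right b a b, real_inner_self_eq_norm_sq,
      norm_sub_sq_real, real_inner_comm b a]
    ring
  have hconv : ∀ a b : H, (F b - μ / 2 * ‖b‖ ^ 2) + ⟪gradient F b - μ • b, a - b⟫
      ≤ F a - μ / 2 * ‖a‖ ^ 2 := fun a b => by linarith [hquad a b, hsc a b]
  have hdesc : ∀ a b : H, F a - μ / 2 * ‖a‖ ^ 2 ≤ (F b - μ / 2 * ‖b‖ ^ 2)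
      + ⟪gradient F b - μ • b, a - b⟫ + (L - μ) / 2 * ‖a - b‖ ^ 2 := fun a b => by
    linarith [hquad a b, le_add_inner_gradient_add_sq_of_lipschitz hF hlip a b]
  set Δ := x - xstar
  set u := (gradient F x - μ • x) - (gradient F xstar - μ • xstar)
  have hcoco : ‖u‖ ^ 2 ≤ (L - μ) * ⟪u, Δ⟫ :=
    norm_sub_sq_le_mul_inner_of_convex_of_smooth hconv hdesc x xstar
  have hmono : 0 ≤ ⟪u, Δ⟫ := by
    have h := hconv xstar x
    rw [← neg_sub x xstar, inner_neg_right] at h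
    rw [inner_sub_left]
    linarith [hconv x xstar]
  have hstep : x - α • gradient F x - xstar = (1 - μ * α) • Δ - α • u := by
    simp only [Δ, u, hstar]
    module
  have hβ : 0 ≤ 1 - μ * α := by nlinarith
  rw [hstep, ← pow_le_pow_iff_left₀ (norm_nonneg _) (by positivity) two_ne_zero,
    norm_sub_sq_real, norm_smul, norm_smul, Real.norm_of_nonneg hβ, Real.norm_of_nonneg hα,
    real_inner_smul_left, real_inner_smul_right, real_inner_comm]
  nlinarith [mul_le_mul_of_nonneg_left hcoco (sq_nonneg α),
    mul_nonneg (mul_nonneg hα hmono) (by nlinarith : 0 ≤ 2 * (1 - μ * α) - α * (L - μ))]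

end GradientStep

theorem norm_toLp_apply_le_of_opNorm_le {ι : Type*} [Fintype ι] {E F : ι → Type*}
    [∀ i, SeminormedAddCommGroup (E i)] [∀ i, SeminormedAddCommGroup (F i)]
    [∀ i, NormedSpace ℝ (E i)] [∀ i, NormedSpace ℝ (F i)]
    (T : ∀ i, E i →L[ℝ] F i) {K : ℝ} (hK : 0 ≤ K) (hT : ∀ i, ‖T i‖ ≤ K) (w : PiLp 2 E) :
    ‖WithLp.toLp 2 (fun i => T i (w i))‖ ≤ K * ‖w‖ := by
  rw [← pow_le_pow_iff_left₀ (norm_nonneg _) (by positivity) two_ne_zero, mul_pow,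
    PiLp.norm_sq_eq_of_L2, PiLp.norm_sq_eq_of_L2, Finset.mul_sum]
  gcongr with i
  rw [← mul_pow]
  exact pow_le_pow_left₀ (norm_nonneg _) ((T i).le_of_opNorm_le (hT i) (w i)) 2

section ChainRule

variable {E Y : Type*} [NormedAddCommGroup E] [InnerProductSpace ℝ E] [CompleteSpace E]
  [NormedAddCommGroup Y] [InnerProductSpace ℝ Y] [CompleteSpace Y]

theorem fderiv_uncurry_apply_eq_inner_gradient {f : E → Y → ℝ} {a : E} {b : Y}
    (hf : DifferentiableAt ℝ (fun p : E × Y => f p.1 p.2) (a, b)) (u : E) (v : Y) :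
    fderiv ℝ (fun p : E × Y => f p.1 p.2) (a, b) (u, v)
      = ⟪gradient (fun z => f z b) a, u⟫ + ⟪gradient (f a) b, v⟫ := by
  set D := fderiv ℝ (fun p : E × Y => f p.1 p.2) (a, b)
  have h₁ : HasFDerivAt (fun z => f z b) (D.comp (.inl ℝ E Y)) a :=
    hf.hasFDerivAt.comp (g := fun p : E × Y => f p.1 p.2) a
      (hasFDerivAt_prodMk_left (𝕜 := ℝ) a b)
  have h₂ : HasFDerivAt (f a) (D.comp (.inr ℝ E Y)) b :=
    hf.hasFDerivAt.comp (g := fun p : E × Y => f p.1 p.2) b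
      (hasFDerivAt_prodMk_right (𝕜 := ℝ) a b)
  rw [inner_gradient_left, inner_gradient_left, h₁.fderiv, h₂.fderiv,
    ContinuousLinearMap.comp_apply, ContinuousLinearMap.comp_apply, ← map_add]
  simp

theorem gradient_sum_apply_aggregate {ι : Type*} [Fintype ι] {E : ι → Type*}
    [∀ i, NormedAddCommGroup (E i)] [∀ i, InnerProductSpace ℝ (E i)] [∀ i, CompleteSpace (E i)]
    (φ : ∀ i, E i → Y) (f : ∀ i, E i → Y → ℝ) (c : ℝ) (x : PiLp 2 E)
    (hφ : ∀ i, DifferentiableAt ℝ (φ i) (x i))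
    (hf : ∀ i, DifferentiableAt ℝ (fun p : E i × Y => f i p.1 p.2) (x i, c • ∑ j, φ j (x j))) :
    gradient (fun x : PiLp 2 E => ∑ i, f i (x i) (c • ∑ j, φ j (x j))) x
      = WithLp.toLp 2 (fun i => gradient (fun z => f i z (c • ∑ j, φ j (x j))) (x i) +
          ContinuousLinearMap.adjoint (fderiv ℝ (φ i) (x i))
            (c • ∑ j, gradient (f j (x j)) (c • ∑ j, φ j (x j)))) := by
  set s := c • ∑ j, φ j (x j)
  set Ds : PiLp 2 E →L[ℝ] Y := c • ∑ j, (fderiv ℝ (φ j) (x j)).comp (PiLp.proj 2 E j)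
  have hs : HasFDerivAt (fun x : PiLp 2 E => c • ∑ j, φ j (x j)) Ds x :=
    (HasFDerivAt.fun_sum fun j _ =>
      (hφ j).hasFDerivAt.comp x (PiLp.proj 2 E j).hasFDerivAt).const_smul c
  have hT : HasFDerivAt (fun x : PiLp 2 E => ∑ i, f i (x i) (c • ∑ j, φ j (x j)))
      (∑ i, (fderiv ℝ (fun p : E i × Y => f i p.1 p.2) (x i, s)).comp
        ((PiLp.proj 2 E i).prod Ds)) x :=
    HasFDerivAt.fun_sum fun i _ =>
      (hf i).hasFDerivAt.comp (g := fun p : E i × Y => f i p.1 p.2) x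
        ((PiLp.proj 2 E i).hasFDerivAt.prodMk hs)
  refine ext_inner_right ℝ fun v => ?_
  rw [inner_gradient_left, hT.fderiv, PiLp.inner_apply]
  simp only [_root_.sum_apply, ContinuousLinearMap.comp_apply,
    ContinuousLinearMap.prod_apply, fderiv_uncurry_apply_eq_inner_gradient (hf _),
    inner_add_left, ContinuousLinearMap.adjoint_inner_left, Finset.sum_add_distrib]
  congr 1
  rw [← sum_inner, ← inner_sum]
  simp [Ds, real_inner_smul_left, real_inner_smul_right]

end ChainRule

theorem dgt_onestep_optimality_gap_general (N d : ℕ) (nn : Fin N → ℕ)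
    (φ : ∀ i, EuclideanSpace ℝ (Fin (nn i)) → EuclideanSpace ℝ (Fin d))
    (f : ∀ i, EuclideanSpace ℝ (Fin (nn i)) → EuclideanSpace ℝ (Fin d) → ℝ)
    (hφdiff : ∀ i, Differentiable ℝ (φ i))
    (hfdiff : ∀ i, Differentiable ℝ
      (fun p : EuclideanSpace ℝ (Fin (nn i)) × EuclideanSpace ℝ (Fin d) => f i p.1 p.2))
    -- the partial gradients ∇₁fᵢ and ∇₂fᵢ
    (g1 : ∀ i, EuclideanSpace ℝ (Fin (nn i)) → EuclideanSpace ℝ (Fin d) →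
      EuclideanSpace ℝ (Fin (nn i)))
    (g2 : ∀ i, EuclideanSpace ℝ (Fin (nn i)) → EuclideanSpace ℝ (Fin d) →
      EuclideanSpace ℝ (Fin d))
    (hg1 : ∀ i u s, g1 i u s = gradient (fun z => f i z s) u)
    (hg2 : ∀ i u s, g2 i u s = gradient (f i u) s)
    -- the global objective f(x) = Σᵢ fᵢ(xᵢ, σ(x)) with σ(x) = (1/N)Σᵢ φᵢ(xᵢ)
    (F : StackedX N nn → ℝ)
    (hF : ∀ x : StackedX N nn, F x = ∑ i, f i (x i) ((N : ℝ)⁻¹ • ∑ j, φ j (x j)))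
    -- Assumption 2
    (μ L₁ L₃ : ℝ) (hL₁ : 0 < L₁) (hL₃ : 0 < L₃)
    (hFdiff : Differentiable ℝ F)
    (hsc : ∀ x y : StackedX N nn,
      F x ≥ F y + (inner ℝ (gradient F y) (x - y) : ℝ) + μ / 2 * ‖x - y‖ ^ 2)
    (hsmooth : ∀ x y : StackedX N nn, ‖gradient F x - gradient F y‖ ≤ L₁ * ‖x - y‖)
    (hGlip : ∀ (x x' : StackedX N nn) (y y' : StackedY N d),
      ‖combinedGrad φ g1 g2 x y - combinedGrad φ g1 g2 x' y'‖ ≤ L₁ * (‖x - x'‖ + ‖y - y'‖))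
    (hφbound : ∀ (i : Fin N) (xi : EuclideanSpace ℝ (Fin (nn i))), ‖fderiv ℝ (φ i) xi‖ ≤ L₃)
    -- the minimizer of F
    (xstar : StackedX N nn) (hmin : ∀ z, F xstar ≤ F z)
    -- one DGT step
    (α : ℝ) (hα0 : 0 < α) (hα1 : α ≤ 1 / L₁)
    (xk xk1 : StackedX N nn) (σk yk : StackedY N d)
    (htrackσ : (N : ℝ)⁻¹ • ∑ i, σk i = (N : ℝ)⁻¹ • ∑ i, φ i (xk i))
    (htracky : (N : ℝ)⁻¹ • ∑ i, yk i = (N : ℝ)⁻¹ • ∑ i, g2 i (xk i) (σk i))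
    (hxup : ∀ i, xk1 i = xk i - α • (g1 i (xk i) (σk i) +
      ContinuousLinearMap.adjoint (fderiv ℝ (φ i) (xk i)) (yk i))) :
    ‖xk1 - xstar‖ ≤ (1 - μ * α) * ‖xk - xstar‖ + α * L₁ * ‖σk - Jmap σk‖ + α * L₃ * ‖yk - Jmap yk‖ := by
  have hgrad_star : gradient F xstar = 0 := by
    simp [gradient, IsLocalMin.fderiv_eq_zero (Filter.Eventually.of_forall hmin)]
  have hgrad : gradient F xk = combinedGrad φ g1 g2 xk (Jmap σk) := by
    rw [show F = _ from funext hF,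
      gradient_sum_apply_aggregate φ f _ xk (fun i => hφdiff i _) (fun i => hfdiff i _)]
    simp only [combinedGrad, Jmap, PiLp.toLp_apply, htrackσ, hg1, hg2]
  set e : StackedX N nn := WithLp.toLp 2 fun i =>
    ContinuousLinearMap.adjoint (fderiv ℝ (φ i) (xk i)) ((yk - Jmap yk) i)
  have hstep : xk1 = xk - α • (combinedGrad φ g1 g2 xk σk + e) := by
    ext1 i
    simp only [hxup, combinedGrad, e, Jmap, ← htracky, map_sub, PiLp.sub_apply, PiLp.add_apply,
      PiLp.smul_apply]
    module
  have he : ‖e‖ ≤ L₃ * ‖yk - Jmap yk‖ :=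
    norm_toLp_apply_le_of_opNorm_le _ hL₃.le
      (fun i => (LinearIsometryEquiv.norm_map _ _).trans_le (hφbound i (xk i))) _
  have hσ : ‖combinedGrad φ g1 g2 xk σk - gradient F xk‖ ≤ L₁ * ‖σk - Jmap σk‖ := by
    simpa [hgrad] using hGlip xk xk σk (Jmap σk)
  have hcontr := norm_sub_smul_gradient_sub_le hFdiff hsc hsmooth hgrad_star hα0.le
    ((le_div_iff₀ hL₁).mp hα1) xk
  calc ‖xk1 - xstar‖
      = ‖(xk - α • gradient F xk - xstar)
          - α • (combinedGrad φ g1 g2 xk σk - gradient F xk) - α • e‖ := by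
        rw [hstep]; congr 1; module
    _ ≤ ‖xk - α • gradient F xk - xstar‖
          + α * ‖combinedGrad φ g1 g2 xk σk - gradient F xk‖ + α * ‖e‖ := by
        rw [← norm_smul_of_nonneg hα0.le, ← norm_smul_of_nonneg hα0.le]
        exact (norm_sub_le _ _).trans (by gcongr; exact norm_sub_le _ _)
    _ ≤ _ := by
        rw [mul_assoc α L₁, mul_assoc α L₃]
        gcongr

/-- Under Assumption 2 and one DGT step with stepsize `0 < α ≤ 1/L₁`,
`‖x_{k+1} - x*‖ ≤ (1 - μα)‖x_k - x*‖ + αL₁‖σ_k - 𝒥σ_k‖ + αL₃‖y_k - 𝒥y_k‖`. -/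
theorem dgt_onestep_optimality_gap (N d : ℕ) (hN : 0 < N) (nn : Fin N → ℕ)
    (φ : ∀ i, EuclideanSpace ℝ (Fin (nn i)) → EuclideanSpace ℝ (Fin d))
    (f : ∀ i, EuclideanSpace ℝ (Fin (nn i)) → EuclideanSpace ℝ (Fin d) → ℝ)
    (hφdiff : ∀ i, Differentiable ℝ (φ i))
    (hfdiff : ∀ i, Differentiable ℝ
      (fun p : EuclideanSpace ℝ (Fin (nn i)) × EuclideanSpace ℝ (Fin d) => f i p.1 p.2))
    -- the partial gradients ∇₁fᵢ and ∇₂fᵢ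
    (g1 : ∀ i, EuclideanSpace ℝ (Fin (nn i)) → EuclideanSpace ℝ (Fin d) →
      EuclideanSpace ℝ (Fin (nn i)))
    (g2 : ∀ i, EuclideanSpace ℝ (Fin (nn i)) → EuclideanSpace ℝ (Fin d) →
      EuclideanSpace ℝ (Fin d))
    (hg1 : ∀ i u s, g1 i u s = gradient (fun z => f i z s) u)
    (hg2 : ∀ i u s, g2 i u s = gradient (f i u) s)
    -- the global objective f(x) = Σᵢ fᵢ(xᵢ, σ(x)) with σ(x) = (1/N)Σᵢ φᵢ(xᵢ)
    (F : StackedX N nn → ℝ)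
    (hF : ∀ x : StackedX N nn, F x = ∑ i, f i (x i) ((N : ℝ)⁻¹ • ∑ j, φ j (x j)))
    -- Assumption 2
    (μ L₁ L₂ L₃ : ℝ) (hμ : 0 < μ) (hL₁ : 0 < L₁) (hL₂ : 0 < L₂) (hL₃ : 0 < L₃)
    (hFdiff : Differentiable ℝ F)
    (hsc : ∀ x y : StackedX N nn,
      F x ≥ F y + (inner ℝ (gradient F y) (x - y) : ℝ) + μ / 2 * ‖x - y‖ ^ 2)
    (hsmooth : ∀ x y : StackedX N nn, ‖gradient F x - gradient F y‖ ≤ L₁ * ‖x - y‖)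
    (hGlip : ∀ (x x' : StackedX N nn) (y y' : StackedY N d),
      ‖combinedGrad φ g1 g2 x y - combinedGrad φ g1 g2 x' y'‖ ≤ L₁ * (‖x - x'‖ + ‖y - y'‖))
    (hG2lip : ∀ (x x' : StackedX N nn) (y y' : StackedY N d),
      ‖stackedGrad2 g2 x y - stackedGrad2 g2 x' y'‖ ≤ L₂ * (‖x - x'‖ + ‖y - y'‖))
    (hφbound : ∀ (i : Fin N) (xi : EuclideanSpace ℝ (Fin (nn i))), ‖fderiv ℝ (φ i) xi‖ ≤ L₃)
    -- the weight matrix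
    (A : Matrix (Fin N) (Fin N) ℝ)
    (hA0 : ∀ i j, 0 ≤ A i j)
    (hrow : ∀ i, ∑ j, A i j = 1) (hcol : ∀ j, ∑ i, A i j = 1)
    -- the minimizer of F
    (xstar : StackedX N nn) (hmin : ∀ z, F xstar ≤ F z)
    -- one DGT step
    (α : ℝ) (hα0 : 0 < α) (hα1 : α ≤ 1 / L₁)
    (xk xk1 : StackedX N nn) (σk σk1 yk yk1 : StackedY N d)
    (htrackσ : (N : ℝ)⁻¹ • ∑ i, σk i = (N : ℝ)⁻¹ • ∑ i, φ i (xk i))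
    (htracky : (N : ℝ)⁻¹ • ∑ i, yk i = (N : ℝ)⁻¹ • ∑ i, g2 i (xk i) (σk i))
    (hxup : ∀ i, xk1 i = xk i - α • (g1 i (xk i) (σk i) +
      ContinuousLinearMap.adjoint (fderiv ℝ (φ i) (xk i)) (yk i)))
    (hσup : ∀ i, σk1 i = ∑ j, A i j • σk j + φ i (xk1 i) - φ i (xk i))
    (hyup : ∀ i, yk1 i = ∑ j, A i j • yk j + g2 i (xk1 i) (σk1 i) - g2 i (xk i) (σk i)) :
    ‖xk1 - xstar‖ ≤ (1 - μ * α) * ‖xk - xstar‖ + α * L₁ * ‖σk - Jmap σk‖ + α * L₃ * ‖yk - Jmap yk‖ :=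
  dgt_onestep_optimality_gap_general N d nn φ f hφdiff hfdiff g1 g2 hg1 hg2 F hF μ L₁ L₃ hL₁ hL₃
    hFdiff hsc hsmooth hGlip hφbound xstar hmin α hα0 hα1 xk xk1 σk yk htrackσ htracky hxup
end
end

section
/- Suppose each φ_i is differentiable with ‖∇φ_i(x_i)‖ ≤ L₃ (operator norm) for all x_i and i, A is nonnegative doubly stochastic with ρ := ‖A − J‖, and for any x_k, x_{k+1} ∈ ℝ^n and σ_k ∈ ℝ^{Nd} set σ_{i,k+1} := Σ_{j=1}^N a_{ij}σ_{j,k} + φ_i(x_{i,k+1}) − φ_i(x_{i,k}). Then ‖σ_{k+1} − 𝒥σ_{k+1}‖ ≤ ρ‖σ_k − 𝒥σ_k‖ + L₃‖x_{k+1} − x_k‖. -/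
/-!
Writing `Δ` for the stacked increment `col(φᵢ(x_{i,k+1}) - φᵢ(x_{i,k}))`, the update reads
`σ_{k+1} = (A ⊗ I) σ_k + Δ`. Since `A` is doubly stochastic, `(I - J) A = (A - J)(I - J)`,
hence `σ_{k+1} - 𝒥σ_{k+1} = ((A - J) ⊗ I)(σ_k - 𝒥σ_k) + (Δ - 𝒥Δ)`. The operator `M ⊗ I` acts
on each of the `d` coordinate columns separately, so its norm is at most `‖M‖`; `I - 𝒥` is an
orthogonal projection, so `‖Δ - 𝒥Δ‖ ≤ ‖Δ‖`; and the mean value inequality, block by block,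
gives `‖Δ‖ ≤ L₃ ‖x_{k+1} - x_k‖`.
-/

noncomputable section
open scoped BigOperators

lemma PiLp.norm_le_mul_norm_of_forall_norm_le {ι : Type*} [Fintype ι] {β γ : ι → Type*}
    [∀ i, SeminormedAddCommGroup (β i)] [∀ i, SeminormedAddCommGroup (γ i)]
    {f : PiLp 2 β} {g : PiLp 2 γ} {L : ℝ} (hL : 0 ≤ L) (h : ∀ i, ‖f i‖ ≤ L * ‖g i‖) :
    ‖f‖ ≤ L * ‖g‖ := by
  refine le_of_sq_le_sq ?_ (by positivity)
  rw [PiLp.norm_sq_eq_of_L2, mul_pow, PiLp.norm_sq_eq_of_L2, Finset.mul_sum]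
  gcongr with i
  rw [← mul_pow]
  exact pow_le_pow_left₀ (norm_nonneg _) (h i) 2

section StackedMul

variable {ι E : Type*} [Fintype ι] [SeminormedAddCommGroup E] [NormedSpace ℝ E]

/-- The action of `M ⊗ I` on stacked vectors. -/
def stackedMul (M : Matrix ι ι ℝ) :
    PiLp 2 (fun _ : ι => E) →ₗ[ℝ] PiLp 2 (fun _ : ι => E) where
  toFun z := WithLp.toLp 2 fun i => ∑ j, M i j • z j
  map_add' z w := PiLp.ext fun i => by
    simp only [PiLp.add_apply, smul_add, Finset.sum_add_distrib]
  map_smul' c z := PiLp.ext fun i => by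
    simp only [PiLp.smul_apply, RingHom.id_apply, Finset.smul_sum, smul_smul, mul_comm]

@[simp]
lemma stackedMul_apply (M : Matrix ι ι ℝ) (z : PiLp 2 (fun _ : ι => E)) (i : ι) :
    stackedMul M z i = ∑ j, M i j • z j := rfl

lemma stackedMul_one [DecidableEq ι] :
    stackedMul (1 : Matrix ι ι ℝ) = (LinearMap.id : PiLp 2 (fun _ : ι => E) →ₗ[ℝ] _) :=
  LinearMap.ext fun z => PiLp.ext fun i => by simp [Matrix.one_apply, ite_smul]

lemma stackedMul_sub (M M' : Matrix ι ι ℝ) :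
    (stackedMul (M - M') : PiLp 2 (fun _ : ι => E) →ₗ[ℝ] _) = stackedMul M - stackedMul M' :=
  LinearMap.ext fun z => PiLp.ext fun i => by simp [sub_smul, Finset.sum_sub_distrib]

lemma stackedMul_mul (M M' : Matrix ι ι ℝ) :
    (stackedMul (M * M') : PiLp 2 (fun _ : ι => E) →ₗ[ℝ] _) = stackedMul M ∘ₗ stackedMul M' :=
  LinearMap.ext fun z => PiLp.ext fun i => by
    simp only [stackedMul_apply, LinearMap.comp_apply, Matrix.mul_apply, Finset.sum_smul,
      Finset.smul_sum, smul_smul]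
    exact Finset.sum_comm

end StackedMul

section Column

variable {ι κ : Type*} [Fintype ι] [Fintype κ]

def stackedColumn (z : PiLp 2 (fun _ : ι => EuclideanSpace ℝ κ)) (k : κ) : EuclideanSpace ℝ ι :=
  WithLp.toLp 2 fun i => z i k

lemma norm_sq_eq_sum_norm_sq_stackedColumn (z : PiLp 2 (fun _ : ι => EuclideanSpace ℝ κ)) :
    ‖z‖ ^ 2 = ∑ k, ‖stackedColumn z k‖ ^ 2 := by
  simp only [PiLp.norm_sq_eq_of_L2, stackedColumn]
  exact Finset.sum_comm

lemma stackedColumn_stackedMul [DecidableEq ι] (M : Matrix ι ι ℝ)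
    (z : PiLp 2 (fun _ : ι => EuclideanSpace ℝ κ)) (k : κ) :
    stackedColumn (stackedMul M z) k = Matrix.toEuclideanLin M (stackedColumn z k) :=
  PiLp.ext fun i => by simp [stackedColumn, Matrix.mulVec, dotProduct]

lemma norm_stackedMul_le [DecidableEq ι] (M : Matrix ι ι ℝ)
    (z : PiLp 2 (fun _ : ι => EuclideanSpace ℝ κ)) :
    ‖stackedMul M z‖ ≤ ‖(Matrix.toEuclideanLin M).toContinuousLinearMap‖ * ‖z‖ := by
  set c := ‖(Matrix.toEuclideanLin M).toContinuousLinearMap‖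
  refine le_of_sq_le_sq ?_ (by positivity)
  calc ‖stackedMul M z‖ ^ 2 = ∑ k, ‖Matrix.toEuclideanLin M (stackedColumn z k)‖ ^ 2 := by
        simp only [norm_sq_eq_sum_norm_sq_stackedColumn, stackedColumn_stackedMul]
    _ ≤ ∑ k, (c * ‖stackedColumn z k‖) ^ 2 := by
        gcongr with k
        exact (Matrix.toEuclideanLin M).toContinuousLinearMap.le_opNorm _
    _ = (c * ‖z‖) ^ 2 := by
        simp only [mul_pow, ← Finset.mul_sum, norm_sq_eq_sum_norm_sq_stackedColumn]

end Column

lemma consensusJ_mul_of_sum_col_eq_one {N : ℕ} {A : Matrix (Fin N) (Fin N) ℝ}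
    (hcol : ∀ j, ∑ i, A i j = 1) : consensusJ N * A = consensusJ N := by
  ext i j
  simp [consensusJ, Matrix.mul_apply, ← Finset.mul_sum, hcol]

lemma mul_consensusJ_of_sum_row_eq_one {N : ℕ} {A : Matrix (Fin N) (Fin N) ℝ}
    (hrow : ∀ i, ∑ j, A i j = 1) : A * consensusJ N = consensusJ N := by
  ext i j
  simp [consensusJ, Matrix.mul_apply, ← Finset.sum_mul, hrow]

lemma consensusJ_mul_self (N : ℕ) : consensusJ N * consensusJ N = consensusJ N := by
  refine consensusJ_mul_of_sum_col_eq_one fun j => ?_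
  have : (N : ℝ) ≠ 0 := Nat.cast_ne_zero.mpr (Fin.pos j).ne'
  simp [consensusJ, this]

lemma Jmap_eq_stackedMul {N d : ℕ} (z : StackedY N d) :
    Jmap z = stackedMul (consensusJ N) z :=
  PiLp.ext fun i => by simp [Jmap, consensusJ, Finset.smul_sum]

lemma sub_Jmap_eq_stackedMul {N d : ℕ} (z : StackedY N d) :
    z - Jmap z = stackedMul (1 - consensusJ N) z := by
  rw [stackedMul_sub, stackedMul_one, Jmap_eq_stackedMul]
  rfl

lemma stackedMul_add_sub_Jmap {N d : ℕ} {A : Matrix (Fin N) (Fin N) ℝ}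
    (hrow : ∀ i, ∑ j, A i j = 1) (hcol : ∀ j, ∑ i, A i j = 1) (z w : StackedY N d) :
    stackedMul A z + w - Jmap (stackedMul A z + w) =
      stackedMul (A - consensusJ N) (z - Jmap z) + (w - Jmap w) := by
  have hcomm : (1 - consensusJ N) * A = (A - consensusJ N) * (1 - consensusJ N) := by
    simp only [sub_mul, mul_sub, one_mul, mul_one, consensusJ_mul_of_sum_col_eq_one hcol,
      mul_consensusJ_of_sum_row_eq_one hrow, consensusJ_mul_self, sub_self, sub_zero]
  simp only [sub_Jmap_eq_stackedMul, map_add, ← LinearMap.comp_apply, ← stackedMul_mul, hcomm]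

lemma inner_Jmap_sub_self {N d : ℕ} (z : StackedY N d) : inner ℝ (Jmap z) (z - Jmap z) = 0 := by
  obtain rfl | hN := N.eq_zero_or_pos
  · rw [Subsingleton.elim (Jmap z) 0, inner_zero_left]
  set m := (N : ℝ)⁻¹ • ∑ j, z j
  have hsum : ∑ j, z j = (N : ℝ) • m := by
    rw [smul_smul, mul_inv_cancel₀ (Nat.cast_ne_zero.mpr hN.ne'), one_smul]
  calc inner ℝ (Jmap z) (z - Jmap z) = ∑ i, inner ℝ m (z i - m) := PiLp.inner_apply _ _
    _ = inner ℝ m (∑ i, z i - (N : ℝ) • m) := by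
      rw [← inner_sum, Finset.sum_sub_distrib, Finset.sum_const, Finset.card_univ,
        Fintype.card_fin, Nat.cast_smul_eq_nsmul]
    _ = 0 := by rw [← hsum, sub_self, inner_zero_right]

lemma norm_sub_Jmap_le {N d : ℕ} (z : StackedY N d) : ‖z - Jmap z‖ ≤ ‖z‖ := by
  have h := norm_add_sq_eq_norm_sq_add_norm_sq_real (inner_Jmap_sub_self z)
  rw [add_sub_cancel] at h
  rw [mul_self_le_mul_self_iff (norm_nonneg _) (norm_nonneg _), h]
  exact le_add_of_nonneg_left (mul_self_nonneg _)

theorem dgt_sigma_consensus_step_general (N d : ℕ) (hN : 0 < N) (nn : Fin N → ℕ) (L₃ : ℝ)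
    (φ : ∀ i, EuclideanSpace ℝ (Fin (nn i)) → EuclideanSpace ℝ (Fin d))
    (hφdiff : ∀ i, Differentiable ℝ (φ i))
    (hφbound : ∀ (i : Fin N) (xi : EuclideanSpace ℝ (Fin (nn i))), ‖fderiv ℝ (φ i) xi‖ ≤ L₃)
    (A : Matrix (Fin N) (Fin N) ℝ)
    (hrow : ∀ i, ∑ j, A i j = 1) (hcol : ∀ j, ∑ i, A i j = 1)
    (xk xk1 : StackedX N nn) (σk σk1 : StackedY N d)
    (hσup : ∀ i, σk1 i = ∑ j, A i j • σk j + φ i (xk1 i) - φ i (xk i)) :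
    ‖σk1 - Jmap σk1‖ ≤ matrixL2OpNorm (A - consensusJ N) * ‖σk - Jmap σk‖ + L₃ * ‖xk1 - xk‖ := by
  set Δ : StackedY N d := WithLp.toLp 2 fun i => φ i (xk1 i) - φ i (xk i)
  have hσ : σk1 = stackedMul A σk + Δ := PiLp.ext fun i => by rw [hσup, add_sub_assoc]; rfl
  have hΔ : ‖Δ‖ ≤ L₃ * ‖xk1 - xk‖ :=
    PiLp.norm_le_mul_norm_of_forall_norm_le ((norm_nonneg _).trans (hφbound ⟨0, hN⟩ 0)) fun i =>
      convex_univ.norm_image_sub_le_of_norm_fderiv_le (fun x _ => (hφdiff i).differentiableAt)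
        (fun x _ => hφbound i x) trivial trivial
  calc ‖σk1 - Jmap σk1‖
      = ‖stackedMul (A - consensusJ N) (σk - Jmap σk) + (Δ - Jmap Δ)‖ := by
        rw [hσ, stackedMul_add_sub_Jmap hrow hcol]
    _ ≤ ‖stackedMul (A - consensusJ N) (σk - Jmap σk)‖ + ‖Δ - Jmap Δ‖ := norm_add_le _ _
    _ ≤ matrixL2OpNorm (A - consensusJ N) * ‖σk - Jmap σk‖ + L₃ * ‖xk1 - xk‖ :=
      add_le_add (norm_stackedMul_le _ _) ((norm_sub_Jmap_le Δ).trans hΔ)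

/-- If each `φᵢ` has `‖∇φᵢ‖ ≤ L₃`, `A` is nonnegative doubly stochastic with
`ρ = ‖A - J‖` (ℓ₂-operator norm), and `σ_{k+1,i} = Σⱼ a_{ij}σ_{k,j} + φᵢ(x_{k+1,i}) - φᵢ(x_{k,i})`,
then `‖σ_{k+1} - 𝒥σ_{k+1}‖ ≤ ρ‖σ_k - 𝒥σ_k‖ + L₃‖x_{k+1} - x_k‖`. -/
theorem dgt_sigma_consensus_step (N d : ℕ) (hN : 0 < N) (nn : Fin N → ℕ) (L₃ : ℝ)
    (φ : ∀ i, EuclideanSpace ℝ (Fin (nn i)) → EuclideanSpace ℝ (Fin d))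
    (hφdiff : ∀ i, Differentiable ℝ (φ i))
    (hφbound : ∀ (i : Fin N) (xi : EuclideanSpace ℝ (Fin (nn i))), ‖fderiv ℝ (φ i) xi‖ ≤ L₃)
    (A : Matrix (Fin N) (Fin N) ℝ)
    (hA0 : ∀ i j, 0 ≤ A i j)
    (hrow : ∀ i, ∑ j, A i j = 1) (hcol : ∀ j, ∑ i, A i j = 1)
    (xk xk1 : StackedX N nn) (σk σk1 : StackedY N d)
    (hσup : ∀ i, σk1 i = ∑ j, A i j • σk j + φ i (xk1 i) - φ i (xk i)) :
    ‖σk1 - Jmap σk1‖ ≤ matrixL2OpNorm (A - consensusJ N) * ‖σk - Jmap σk‖ + L₃ * ‖xk1 - xk‖ :=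
  dgt_sigma_consensus_step_general N d hN nn L₃ φ hφdiff hφbound A hrow hcol xk xk1 σk σk1 hσup
end
end

section
/- Suppose ∇_2 f is L₂-Lipschitz, each φ_i is differentiable with ‖∇φ_i(x_i)‖ ≤ L₃ for all x_i and i, A is nonnegative doubly stochastic, and for any x_k, x_{k+1} ∈ ℝ^n and σ_k ∈ ℝ^{Nd} set σ_{i,k+1} := Σ_{j=1}^N a_{ij}σ_{j,k} + φ_i(x_{i,k+1}) − φ_i(x_{i,k}). Then ‖∇_2 f(x_{k+1}, σ_{k+1}) − ∇_2 f(x_k, σ_k)‖ ≤ L₂(1 + L₃)‖x_{k+1} − x_k‖ + L₂‖A − I‖·‖σ_k − 𝒥σ_k‖, where ‖A − I‖ is the ℓ₂-operator norm. -/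
/-!
The consensus update splits as
`σₖ₊₁ - σₖ = (φ(xₖ₊₁) - φ(xₖ)) + ((A - I) ⊗ I_d)(σₖ - 𝒥σₖ)`,
because `A - I` has zero row sums and so annihilates the consensus part `𝒥σₖ`. The mean value
inequality bounds the first term by `L₃‖xₖ₊₁ - xₖ‖`; applying `A - I` separately to each of the
`d` coordinate slices bounds the second by `‖A - I‖‖σₖ - 𝒥σₖ‖`. The Lipschitz bound on `∇₂f`
then gives the claim.
-/

noncomputable section
open scoped BigOperators

open Finset

theorem PiLp.norm_le_mul_of_forall_norm_le {ι : Type*} [Fintype ι] {E F : ι → Type*}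
    [∀ i, SeminormedAddCommGroup (E i)] [∀ i, SeminormedAddCommGroup (F i)]
    {u : PiLp 2 E} {v : PiLp 2 F} {C : ℝ} (h : ∀ i, ‖u i‖ ≤ C * ‖v i‖) :
    ‖u‖ ≤ C * ‖v‖ := by
  by_cases hC : 0 ≤ C
  · rw [← sq_le_sq₀ (norm_nonneg u) (by positivity), mul_pow, PiLp.norm_sq_eq_of_L2,
      PiLp.norm_sq_eq_of_L2, mul_sum]
    refine sum_le_sum fun i _ => ?_
    rw [← mul_pow]
    exact pow_le_pow_left₀ (norm_nonneg _) (h i) 2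
  · have hv : ∀ i, ‖v i‖ = 0 := fun i =>
      le_antisymm (nonpos_of_mul_nonneg_right ((norm_nonneg _).trans (h i)) (not_le.mp hC))
        (norm_nonneg _)
    have hu : ∀ i, ‖u i‖ = 0 := fun i =>
      le_antisymm (by simpa [hv i] using h i) (norm_nonneg _)
    simp [PiLp.norm_eq_of_L2, hu, hv]

theorem eq_of_norm_sub_le_mul_of_neg {X Y Z : Type*} [NormedAddCommGroup X]
    [NormedAddCommGroup Y] [SeminormedAddCommGroup Z] {G : X → Y → Z} {L : ℝ} (hL : L < 0)
    (hG : ∀ x x' y y', ‖G x y - G x' y'‖ ≤ L * (‖x - x'‖ + ‖y - y'‖))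
    (x x' : X) (y y' : Y) : x = x' ∧ y = y' := by
  have hsum : ‖x - x'‖ + ‖y - y'‖ = 0 :=
    le_antisymm (nonpos_of_mul_nonneg_right ((norm_nonneg _).trans (hG x x' y y')) hL)
      (by positivity)
  rw [add_eq_zero_iff_of_nonneg (norm_nonneg _) (norm_nonneg _), norm_sub_eq_zero_iff,
    norm_sub_eq_zero_iff] at hsum
  exact hsum

section Stacked

variable {N d : ℕ}

-- The Kronecker action `(M ⊗ I_d) z`.
def blockMulVec (M : Matrix (Fin N) (Fin N) ℝ) (z : StackedY N d) : StackedY N d :=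
  WithLp.toLp 2 (fun i => ∑ j, M i j • z j)

@[simp]
theorem blockMulVec_apply (M : Matrix (Fin N) (Fin N) ℝ) (z : StackedY N d) (i : Fin N) :
    blockMulVec M z i = ∑ j, M i j • z j := rfl

def coordSlice (z : StackedY N d) (l : Fin d) : EuclideanSpace ℝ (Fin N) :=
  WithLp.toLp 2 (fun j => z j l)

theorem norm_sq_eq_sum_coordSlice (z : StackedY N d) :
    ‖z‖ ^ 2 = ∑ l, ‖coordSlice z l‖ ^ 2 := by
  simp only [PiLp.norm_sq_eq_of_L2, coordSlice]
  exact sum_comm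

theorem coordSlice_blockMulVec (M : Matrix (Fin N) (Fin N) ℝ) (z : StackedY N d) (l : Fin d) :
    coordSlice (blockMulVec M z) l = Matrix.toEuclideanLin M (coordSlice z l) := by
  ext i
  simp [coordSlice, Matrix.mulVec, dotProduct]

theorem norm_toEuclideanLin_le (M : Matrix (Fin N) (Fin N) ℝ) (v : EuclideanSpace ℝ (Fin N)) :
    ‖Matrix.toEuclideanLin M v‖ ≤ matrixL2OpNorm M * ‖v‖ :=
  (LinearMap.toContinuousLinearMap (Matrix.toEuclideanLin M)).le_opNorm v

theorem norm_blockMulVec_le (M : Matrix (Fin N) (Fin N) ℝ) (z : StackedY N d) :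
    ‖blockMulVec M z‖ ≤ matrixL2OpNorm M * ‖z‖ := by
  have hM : 0 ≤ matrixL2OpNorm M := norm_nonneg _
  rw [← sq_le_sq₀ (norm_nonneg _) (by positivity), mul_pow, norm_sq_eq_sum_coordSlice,
    norm_sq_eq_sum_coordSlice, mul_sum]
  refine sum_le_sum fun l _ => ?_
  rw [coordSlice_blockMulVec, ← mul_pow]
  exact pow_le_pow_left₀ (norm_nonneg _) (norm_toEuclideanLin_le M _) 2

theorem blockMulVec_sub_one_sub_Jmap {A : Matrix (Fin N) (Fin N) ℝ}
    (hrow : ∀ i, ∑ j, A i j = 1) (z : StackedY N d) :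
    blockMulVec (A - 1) (z - Jmap z) = blockMulVec A z - z := by
  ext i : 1
  simp [Jmap, Matrix.sub_apply, Matrix.one_apply, sub_smul, smul_sub, sum_sub_distrib,
    ← sum_smul, hrow]

theorem norm_consensus_step_sub_le {nn : Fin N → ℕ} {L₃ : ℝ}
    {φ : ∀ i, EuclideanSpace ℝ (Fin (nn i)) → EuclideanSpace ℝ (Fin d)}
    (hφdiff : ∀ i, Differentiable ℝ (φ i))
    (hφbound : ∀ i xi, ‖fderiv ℝ (φ i) xi‖ ≤ L₃)
    {A : Matrix (Fin N) (Fin N) ℝ} (hrow : ∀ i, ∑ j, A i j = 1)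
    {xk xk1 : StackedX N nn} {σk σk1 : StackedY N d}
    (hσup : ∀ i, σk1 i = ∑ j, A i j • σk j + φ i (xk1 i) - φ i (xk i)) :
    ‖σk1 - σk‖ ≤ L₃ * ‖xk1 - xk‖ + matrixL2OpNorm (A - 1) * ‖σk - Jmap σk‖ := by
  set δφ : StackedY N d := WithLp.toLp 2 (fun i => φ i (xk1 i) - φ i (xk i))
  have hsplit : σk1 - σk = δφ + blockMulVec (A - 1) (σk - Jmap σk) := by
    rw [blockMulVec_sub_one_sub_Jmap hrow]
    ext i : 1
    simp only [PiLp.sub_apply, PiLp.add_apply, blockMulVec_apply, hσup, δφ]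
    abel
  have hδφ : ‖δφ‖ ≤ L₃ * ‖xk1 - xk‖ := PiLp.norm_le_mul_of_forall_norm_le fun i =>
    convex_univ.norm_image_sub_le_of_norm_fderiv_le (fun _ _ => (hφdiff i).differentiableAt)
      (fun _ _ => hφbound i _) (Set.mem_univ _) (Set.mem_univ _)
  calc ‖σk1 - σk‖ ≤ ‖δφ‖ + ‖blockMulVec (A - 1) (σk - Jmap σk)‖ := hsplit ▸ norm_add_le _ _
    _ ≤ _ := add_le_add hδφ (norm_blockMulVec_le _ _)

end Stacked

theorem dgt_grad2_successive_step_general (N d : ℕ) (nn : Fin N → ℕ) (L₂ L₃ : ℝ)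
    (φ : ∀ i, EuclideanSpace ℝ (Fin (nn i)) → EuclideanSpace ℝ (Fin d))
    (hφdiff : ∀ i, Differentiable ℝ (φ i))
    (g2 : ∀ i, EuclideanSpace ℝ (Fin (nn i)) → EuclideanSpace ℝ (Fin d) →
      EuclideanSpace ℝ (Fin d))
    (hG2lip : ∀ (x x' : StackedX N nn) (y y' : StackedY N d),
      ‖stackedGrad2 g2 x y - stackedGrad2 g2 x' y'‖ ≤ L₂ * (‖x - x'‖ + ‖y - y'‖))
    (hφbound : ∀ (i : Fin N) (xi : EuclideanSpace ℝ (Fin (nn i))), ‖fderiv ℝ (φ i) xi‖ ≤ L₃)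
    (A : Matrix (Fin N) (Fin N) ℝ)
    (hrow : ∀ i, ∑ j, A i j = 1)
    (xk xk1 : StackedX N nn) (σk σk1 : StackedY N d)
    (hσup : ∀ i, σk1 i = ∑ j, A i j • σk j + φ i (xk1 i) - φ i (xk i)) :
    ‖stackedGrad2 g2 xk1 σk1 - stackedGrad2 g2 xk σk‖ ≤
      L₂ * (1 + L₃) * ‖xk1 - xk‖ + L₂ * matrixL2OpNorm (A - 1) * ‖σk - Jmap σk‖ := by
  rcases le_or_gt 0 L₂ with hL₂ | hL₂
  · have hσ := norm_consensus_step_sub_le hφdiff hφbound hrow hσup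
    calc ‖stackedGrad2 g2 xk1 σk1 - stackedGrad2 g2 xk σk‖
        ≤ L₂ * (‖xk1 - xk‖ + ‖σk1 - σk‖) := hG2lip _ _ _ _
      _ ≤ L₂ * (‖xk1 - xk‖ + (L₃ * ‖xk1 - xk‖ + matrixL2OpNorm (A - 1) * ‖σk - Jmap σk‖)) := by
          gcongr
      _ = _ := by ring
  · -- A negative Lipschitz constant forces both spaces to be trivial.
    have htriv := eq_of_norm_sub_le_mul_of_neg hL₂ hG2lip
    rw [(htriv xk1 xk σk1 σk).1, (htriv xk1 xk σk1 σk).2, ← (htriv xk xk σk (Jmap σk)).2]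
    simp

/-- If the stacked map `∇₂f` is `L₂`-Lipschitz, each `φᵢ` has `‖∇φᵢ‖ ≤ L₃`,
`A` is nonnegative doubly stochastic, and
`σ_{k+1,i} = Σⱼ a_{ij}σ_{k,j} + φᵢ(x_{k+1,i}) - φᵢ(x_{k,i})`, then
`‖∇₂f(x_{k+1},σ_{k+1}) - ∇₂f(x_k,σ_k)‖ ≤ L₂(1+L₃)‖x_{k+1} - x_k‖ + L₂‖A - I‖·‖σ_k - 𝒥σ_k‖`,
with `‖A - I‖` the ℓ₂-operator norm. -/
theorem dgt_grad2_successive_step (N d : ℕ) (hN : 0 < N) (nn : Fin N → ℕ) (L₂ L₃ : ℝ)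
    (φ : ∀ i, EuclideanSpace ℝ (Fin (nn i)) → EuclideanSpace ℝ (Fin d))
    (f : ∀ i, EuclideanSpace ℝ (Fin (nn i)) → EuclideanSpace ℝ (Fin d) → ℝ)
    (hφdiff : ∀ i, Differentiable ℝ (φ i))
    (hfdiff : ∀ i, Differentiable ℝ
      (fun p : EuclideanSpace ℝ (Fin (nn i)) × EuclideanSpace ℝ (Fin d) => f i p.1 p.2))
    (g2 : ∀ i, EuclideanSpace ℝ (Fin (nn i)) → EuclideanSpace ℝ (Fin d) →
      EuclideanSpace ℝ (Fin d))
    (hg2 : ∀ i u s, g2 i u s = gradient (f i u) s)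
    (hG2lip : ∀ (x x' : StackedX N nn) (y y' : StackedY N d),
      ‖stackedGrad2 g2 x y - stackedGrad2 g2 x' y'‖ ≤ L₂ * (‖x - x'‖ + ‖y - y'‖))
    (hφbound : ∀ (i : Fin N) (xi : EuclideanSpace ℝ (Fin (nn i))), ‖fderiv ℝ (φ i) xi‖ ≤ L₃)
    (A : Matrix (Fin N) (Fin N) ℝ)
    (hA0 : ∀ i j, 0 ≤ A i j)
    (hrow : ∀ i, ∑ j, A i j = 1) (hcol : ∀ j, ∑ i, A i j = 1)
    (xk xk1 : StackedX N nn) (σk σk1 : StackedY N d)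
    (hσup : ∀ i, σk1 i = ∑ j, A i j • σk j + φ i (xk1 i) - φ i (xk i)) :
    ‖stackedGrad2 g2 xk1 σk1 - stackedGrad2 g2 xk σk‖ ≤
      L₂ * (1 + L₃) * ‖xk1 - xk‖ + L₂ * matrixL2OpNorm (A - 1) * ‖σk - Jmap σk‖ :=
  dgt_grad2_successive_step_general N d nn L₂ L₃ φ hφdiff g2 hG2lip hφbound A hrow xk xk1 σk σk1
    hσup
end
end

section
/- Let F : ℝⁿ → ℝ be differentiable, μ-strongly convex and L-smooth with 0 < μ ≤ L, and let 0 < α ≤ 1/L. Then the function H(x) := (1/2)‖x‖² − αF(x) is (1 − μα)-smooth, i.e. ‖∇H(x) − ∇H(y)‖ ≤ (1 − μα)‖x − y‖ for all x, y ∈ ℝⁿ. -/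
/-!
With `G = F - (μ / 2) ‖·‖²` and `d = x - y`, `h = ∇G x - ∇G y`, the step
`∇H x - ∇H y = (1 - μα) d - α h`. The function `G` lies above its tangent planes and below the
paraboloids of curvature `L - μ` over them, so `∇G` is cocoercive (Baillon–Haddad):
`‖h‖² ≤ (L - μ) ⟪h, d⟫`. Expanding `‖(1 - μα) d - α h‖²` and using `α (L - μ) ≤ 2 (1 - μα)`
gives `‖∇H x - ∇H y‖ ≤ (1 - μα) ‖d‖`.
-/

open InnerProductSpace RealInnerProductSpace Filter Topology

section Cocoercivity

variable {E : Type*} [NormedAddCommGroup E] [InnerProductSpace ℝ E]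

theorem inner_sub_nonneg_of_forall_add_inner_le {G : E → ℝ} {p : E → E}
    (hlow : ∀ x y, G y + ⟪p y, x - y⟫_ℝ ≤ G x) (x y : E) :
    0 ≤ ⟪p x - p y, x - y⟫_ℝ := by
  have hxy := hlow x y
  have hyx := hlow y x
  rw [← neg_sub x y, inner_neg_right] at hyx
  rw [inner_sub_left]
  linarith

/-- Baillon–Haddad. Comparing the two bounds at `a - K⁻¹ • (p a - p b)` improves the lower bound
at `b` by `‖p a - p b‖² / (2K)`. -/
theorem sq_norm_sub_le_mul_inner_of_pos {G : E → ℝ} {p : E → E} {K : ℝ} (hK : 0 < K)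
    (hlow : ∀ x y, G y + ⟪p y, x - y⟫_ℝ ≤ G x)
    (hup : ∀ x y, G x ≤ G y + ⟪p y, x - y⟫_ℝ + K / 2 * ‖x - y‖ ^ 2) (x y : E) :
    ‖p x - p y‖ ^ 2 ≤ K * ⟪p x - p y, x - y⟫_ℝ := by
  have hgain : ∀ a b, G b + ⟪p b, a - b⟫_ℝ + ‖p a - p b‖ ^ 2 / (2 * K) ≤ G a := by
    intro a b
    set h := p a - p b
    have hlow' := hlow (a - K⁻¹ • h) b
    have hup' := hup (a - K⁻¹ • h) a
    rw [sub_sub_cancel_left, norm_neg, norm_smul, inner_neg_right, real_inner_smul_right,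
      Real.norm_eq_abs, abs_inv, abs_of_pos hK] at hup'
    rw [sub_right_comm, inner_sub_right, real_inner_smul_right] at hlow'
    have hh : K⁻¹ * ⟪p a, h⟫_ℝ - K⁻¹ * ⟪p b, h⟫_ℝ = K⁻¹ * ‖h‖ ^ 2 := by
      rw [← mul_sub, ← inner_sub_left, real_inner_self_eq_norm_sq]
    have hK' : K⁻¹ * ‖h‖ ^ 2 - K / 2 * (K⁻¹ * ‖h‖) ^ 2 = ‖h‖ ^ 2 / (2 * K) := by
      field_simp; ring
    linarith
  have hxy := hgain x y
  have hyx := hgain y x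
  rw [norm_sub_rev, ← neg_sub x y, inner_neg_right] at hyx
  rw [inner_sub_left, ← div_le_iff₀' hK]
  linarith [show ‖p x - p y‖ ^ 2 / K = 2 * (‖p x - p y‖ ^ 2 / (2 * K)) by field_simp]

theorem sq_norm_sub_le_mul_inner {G : E → ℝ} {p : E → E} {K : ℝ} (hK : 0 ≤ K)
    (hlow : ∀ x y, G y + ⟪p y, x - y⟫_ℝ ≤ G x)
    (hup : ∀ x y, G x ≤ G y + ⟪p y, x - y⟫_ℝ + K / 2 * ‖x - y‖ ^ 2) (x y : E) :
    ‖p x - p y‖ ^ 2 ≤ K * ⟪p x - p y, x - y⟫_ℝ := by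
  have hlim : Tendsto (fun K' => K' * ⟪p x - p y, x - y⟫_ℝ) (𝓝[>] K)
      (𝓝 (K * ⟪p x - p y, x - y⟫_ℝ)) :=
    ((continuous_mul_const _).tendsto K).mono_left nhdsWithin_le_nhds
  refine ge_of_tendsto hlim ?_
  filter_upwards [self_mem_nhdsWithin] with K' (hKK' : K < K')
  refine sq_norm_sub_le_mul_inner_of_pos (hK.trans_lt hKK') hlow (fun x y => ?_) x y
  grw [hup x y, hKK']

theorem forall_add_inner_le_sub_half_sq {F : E → ℝ} {p : E → E} {μ : ℝ}
    (hlow : ∀ x y, F y + ⟪p y, x - y⟫_ℝ + μ / 2 * ‖x - y‖ ^ 2 ≤ F x) (x y : E) :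
    F y - μ / 2 * ‖y‖ ^ 2 + ⟪p y - μ • y, x - y⟫_ℝ ≤ F x - μ / 2 * ‖x‖ ^ 2 := by
  have hexpand := norm_add_sq_real y (x - y)
  rw [add_sub_cancel] at hexpand
  rw [inner_sub_left, real_inner_smul_left]
  linear_combination hlow x y + μ / 2 * hexpand

theorem forall_le_add_inner_sub_half_sq {F : E → ℝ} {p : E → E} {μ L : ℝ}
    (hup : ∀ x y, F x ≤ F y + ⟪p y, x - y⟫_ℝ + L / 2 * ‖x - y‖ ^ 2) (x y : E) :
    F x - μ / 2 * ‖x‖ ^ 2 ≤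
      F y - μ / 2 * ‖y‖ ^ 2 + ⟪p y - μ • y, x - y⟫_ℝ + (L - μ) / 2 * ‖x - y‖ ^ 2 := by
  have hexpand := norm_add_sq_real y (x - y)
  rw [add_sub_cancel] at hexpand
  rw [inner_sub_left, real_inner_smul_left]
  linear_combination hup x y - μ / 2 * hexpand

theorem norm_smul_sub_smul_le_of_sq_norm_le_mul_inner {d h : E} {s α K : ℝ} (hs : 0 ≤ s)
    (hα : 0 ≤ α) (hαK : α * K ≤ 2 * s) (hhd : 0 ≤ ⟪h, d⟫_ℝ) (hco : ‖h‖ ^ 2 ≤ K * ⟪h, d⟫_ℝ) :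
    ‖s • d - α • h‖ ≤ s * ‖d‖ := by
  have hexp : ‖s • d - α • h‖ ^ 2 = (s * ‖d‖) ^ 2 - α * (2 * s * ⟪h, d⟫_ℝ - α * ‖h‖ ^ 2) := by
    rw [norm_sub_sq_real, inner_smul_left, inner_smul_right, norm_smul, norm_smul,
      Real.norm_eq_abs, Real.norm_eq_abs, abs_of_nonneg hs, abs_of_nonneg hα, real_inner_comm]
    simp only [conj_trivial]
    ring
  have hgap : 0 ≤ 2 * s * ⟪h, d⟫_ℝ - α * ‖h‖ ^ 2 := by nlinarith
  refine le_of_sq_le_sq ?_ (by positivity)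
  rw [hexp]
  nlinarith

theorem norm_sub_smul_sub_le {F : E → ℝ} {p : E → E} {μ L α : ℝ} (hμL : μ ≤ L)
    (hlow : ∀ x y, F y + ⟪p y, x - y⟫_ℝ + μ / 2 * ‖x - y‖ ^ 2 ≤ F x)
    (hup : ∀ x y, F x ≤ F y + ⟪p y, x - y⟫_ℝ + L / 2 * ‖x - y‖ ^ 2)
    (hα : 0 ≤ α) (hαL : α * L ≤ 1) (x y : E) :
    ‖(x - α • p x) - (y - α • p y)‖ ≤ (1 - μ * α) * ‖x - y‖ := by
  set h := (p x - μ • x) - (p y - μ • y)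
  have hstep : (x - α • p x) - (y - α • p y) = (1 - μ * α) • (x - y) - α • h := by
    simp only [h]; module
  have hαμ : α * μ ≤ α * L := mul_le_mul_of_nonneg_left hμL hα
  rw [hstep]
  refine norm_smul_sub_smul_le_of_sq_norm_le_mul_inner (K := L - μ) (by nlinarith) hα
    (by nlinarith) ?_ ?_
  · exact inner_sub_nonneg_of_forall_add_inner_le (forall_add_inner_le_sub_half_sq hlow) x y
  · exact sq_norm_sub_le_mul_inner (sub_nonneg.2 hμL) (forall_add_inner_le_sub_half_sq hlow)
      (forall_le_add_inner_sub_half_sq hup) x y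

end Cocoercivity

section Gradient

variable {E : Type*} [NormedAddCommGroup E] [InnerProductSpace ℝ E] [CompleteSpace E]

/-- The descent lemma. Along `t ↦ y + t • (x - y)` the gap between `F` and its quadratic
upper model is antitone, and it vanishes at `t = 0`. -/
theorem le_add_inner_gradient_add_half_sq {F : E → ℝ} {L : ℝ} (hF : Differentiable ℝ F)
    (hL : ∀ x y, ‖gradient F x - gradient F y‖ ≤ L * ‖x - y‖) (x y : E) :
    F x ≤ F y + ⟪gradient F y, x - y⟫_ℝ + L / 2 * ‖x - y‖ ^ 2 := by
  set v := x - y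
  set gap : ℝ → ℝ := fun t => F (y + t • v) - t * ⟪gradient F y, v⟫_ℝ - L / 2 * ‖v‖ ^ 2 * t ^ 2
  have hgap : ∀ t, HasDerivAt gap
      (⟪gradient F (y + t • v), v⟫_ℝ - ⟪gradient F y, v⟫_ℝ - L * ‖v‖ ^ 2 * t) t := by
    intro t
    have hline : HasDerivAt (fun t : ℝ => y + t • v) v t := by
      simpa using ((hasDerivAt_id t).smul_const v).const_add y
    have hFt := (hF (y + t • v)).hasGradientAt.hasFDerivAt.comp_hasDerivAt t hline
    rw [toDual_apply_apply] at hFt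
    refine ((hFt.sub ((hasDerivAt_id t).mul_const ⟪gradient F y, v⟫_ℝ)).sub
      ((hasDerivAt_pow 2 t).const_mul (L / 2 * ‖v‖ ^ 2))).congr_deriv ?_
    simp only [one_mul, Nat.cast_ofNat]
    ring
  have hanti : AntitoneOn gap (Set.Icc 0 1) := by
    refine antitoneOn_of_deriv_nonpos (convex_Icc 0 1)
      (fun t _ => (hgap t).continuousAt.continuousWithinAt)
      (fun t _ => (hgap t).differentiableAt.differentiableWithinAt) fun t ht => ?_
    rw [interior_Icc] at ht
    have hdist : ‖gradient F (y + t • v) - gradient F y‖ ≤ L * (t * ‖v‖) := by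
      simpa [norm_smul, abs_of_pos ht.1] using hL (y + t • v) y
    have hcs := real_inner_le_norm (gradient F (y + t • v) - gradient F y) v
    rw [inner_sub_left] at hcs
    rw [(hgap t).deriv]
    nlinarith [norm_nonneg v]
  have h01 := hanti (Set.left_mem_Icc.2 zero_le_one) (Set.right_mem_Icc.2 zero_le_one)
    zero_le_one
  have hgap0 : gap 0 = F y := by simp [gap]
  have hgap1 : gap 1 = F x - ⟪gradient F y, v⟫_ℝ - L / 2 * ‖v‖ ^ 2 := by simp [gap, v]
  linarith

theorem gradient_half_sq_norm_sub_smul {F : E → ℝ} {x : E} (hF : DifferentiableAt ℝ F x)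
    (α : ℝ) : gradient (fun x => 1 / 2 * ‖x‖ ^ 2 - α * F x) x = x - α • gradient F x := by
  refine HasGradientAt.gradient (hasGradientAt_iff_hasFDerivAt.2 ?_)
  refine (((hasStrictFDerivAt_norm_sq x).hasFDerivAt.const_mul (1 / 2)).sub
    (hF.hasGradientAt.hasFDerivAt.const_mul α)).congr_fderiv ?_
  ext u
  simp

end Gradient

theorem half_sq_sub_smul_smooth_general (n : ℕ) (F : EuclideanSpace ℝ (Fin n) → ℝ) (μ L α : ℝ)
    (hμL : μ ≤ L)
    (hdiff : Differentiable ℝ F)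
    (hsc : ∀ x y : EuclideanSpace ℝ (Fin n),
      F x ≥ F y + (inner ℝ (gradient F y) (x - y) : ℝ) + μ / 2 * ‖x - y‖ ^ 2)
    (hsmooth : ∀ x y : EuclideanSpace ℝ (Fin n),
      ‖gradient F x - gradient F y‖ ≤ L * ‖x - y‖)
    (hα0 : 0 < α) (hα : α ≤ 1 / L)
    (H : EuclideanSpace ℝ (Fin n) → ℝ)
    (hH : ∀ x, H x = 1 / 2 * ‖x‖ ^ 2 - α * F x) :
    ∀ x y : EuclideanSpace ℝ (Fin n),
      ‖gradient H x - gradient H y‖ ≤ (1 - μ * α) * ‖x - y‖ := by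
  intro x y
  have hL : 0 < L := by
    by_contra! hL
    exact hα0.not_ge (hα.trans (one_div_nonpos.2 hL))
  have hαL : α * L ≤ 1 := (le_div_iff₀ hL).1 hα
  obtain rfl : H = fun x => 1 / 2 * ‖x‖ ^ 2 - α * F x := funext hH
  rw [gradient_half_sq_norm_sub_smul (hdiff x), gradient_half_sq_norm_sub_smul (hdiff y)]
  exact norm_sub_smul_sub_le hμL hsc (le_add_inner_gradient_add_half_sq hdiff hsmooth)
    hα0.le hαL x y

/-- If `F : ℝⁿ → ℝ` is differentiable, `μ`-strongly convex and `L`-smooth with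
`0 < μ ≤ L`, and `0 < α ≤ 1/L`, then `H(x) := (1/2)‖x‖² - αF(x)` is `(1 - μα)`-smooth. -/
theorem half_sq_sub_smul_smooth (n : ℕ) (F : EuclideanSpace ℝ (Fin n) → ℝ) (μ L α : ℝ)
    (hμ : 0 < μ) (hμL : μ ≤ L)
    (hdiff : Differentiable ℝ F)
    (hsc : ∀ x y : EuclideanSpace ℝ (Fin n),
      F x ≥ F y + (inner ℝ (gradient F y) (x - y) : ℝ) + μ / 2 * ‖x - y‖ ^ 2)
    (hsmooth : ∀ x y : EuclideanSpace ℝ (Fin n),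
      ‖gradient F x - gradient F y‖ ≤ L * ‖x - y‖)
    (hα0 : 0 < α) (hα : α ≤ 1 / L)
    (H : EuclideanSpace ℝ (Fin n) → ℝ)
    (hH : ∀ x, H x = 1 / 2 * ‖x‖ ^ 2 - α * F x) :
    ∀ x y : EuclideanSpace ℝ (Fin n),
      ‖gradient H x - gradient H y‖ ≤ (1 - μ * α) * ‖x - y‖ :=
  half_sq_sub_smul_smooth_general n F μ L α hμL hdiff hsc hsmooth hα0 hα H hH
end
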